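/- arXiv:2405.08509 — 13 statements merged into one kernel-verified Lean document; each statement's English description precedes it below -/
import Mathlib

section
/- The ordered triples (x, y, z) of positive integers with x ≤ y ≤ z, all Fibonacci numbers, satisfying x² + y² + z² = 3xyz + 2 are exactly the triples (1, F(b), F(b+2)) where b ≥ 2 is an even integer. -/
set_option maxHeartbeats 1000000

/-- A positive integer is a Fibonacci number if it equals `Nat.fib n` for some `n`. -/
def IsFib (x : ℕ) : Prop := ∃ n : ℕ, Nat.fib n = x

lemma fib3 (b : ℕ) : Nat.fib (b + 4) + Nat.fib b = 3 * Nat.fib (b + 2) := by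
  have h1 : Nat.fib (b + 4) = Nat.fib (b + 2) + Nat.fib (b + 3) := Nat.fib_add_two
  have h2 : Nat.fib (b + 3) = Nat.fib (b + 1) + Nat.fib (b + 2) := Nat.fib_add_two
  have h3 : Nat.fib (b + 2) = Nat.fib b + Nat.fib (b + 1) := Nat.fib_add_two
  omega

lemma pell_ident (k : ℕ) :
    Nat.fib (2 * k) ^ 2 + Nat.fib (2 * k + 2) ^ 2
      = 3 * Nat.fib (2 * k) * Nat.fib (2 * k + 2) + 1 := by
  induction k with
  | zero => simp
  | succ k ih =>
    have h3 := fib3 (2 * k)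
    have e1 : 2 * (k + 1) = 2 * k + 2 := by ring
    have e3 : 2 * k + 2 + 2 = 2 * k + 4 := by ring
    rw [e1, e3]
    have hw : (Nat.fib (2 * k + 4) : ℤ) = 3 * Nat.fib (2 * k + 2) - Nat.fib (2 * k) := by
      push_cast; omega
    have ih' : (Nat.fib (2 * k) : ℤ) ^ 2 + (Nat.fib (2 * k + 2) : ℤ) ^ 2
        = 3 * Nat.fib (2 * k) * Nat.fib (2 * k + 2) + 1 := by exact_mod_cast ih
    have : (Nat.fib (2 * k + 2) : ℤ) ^ 2 + (Nat.fib (2 * k + 4) : ℤ) ^ 2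
        = 3 * Nat.fib (2 * k + 2) * Nat.fib (2 * k + 4) + 1 := by
      rw [hw]; nlinarith [ih']
    exact_mod_cast this

lemma pell_solve (y : ℕ) : ∀ z : ℕ, y ≤ z → y ^ 2 + z ^ 2 = 3 * y * z + 1 →
    ∃ b : ℕ, Even b ∧ y = Nat.fib b ∧ z = Nat.fib (b + 2) := by
  induction y using Nat.strong_induction_on with
  | _ y ih =>
    intro z hyz heq
    rcases Nat.eq_zero_or_pos y with h0 | hpos
    · subst h0
      have hz1 : z ≤ 1 := by nlinarith
      have hz2 : 1 ≤ z := by nlinarith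
      have hz : z = 1 := by omega
      refine ⟨0, Even.zero, by simp, ?_⟩
      rw [hz]; rfl
    · have hz3y : z ≤ 3 * y := by nlinarith
      have hzpos : 0 < z := lt_of_lt_of_le hpos hyz
      set w := 3 * y - z with hw
      have hwz : w + z = 3 * y := by omega
      have hwzi : (w : ℤ) = 3 * y - z := by push_cast; omega
      have heqi : (y : ℤ) ^ 2 + (z : ℤ) ^ 2 = 3 * y * z + 1 := by exact_mod_cast heq
      have hweq : w ^ 2 + y ^ 2 = 3 * w * y + 1 := by
        have : (w : ℤ) ^ 2 + (y : ℤ) ^ 2 = 3 * w * y + 1 := by rw [hwzi]; nlinarith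
        exact_mod_cast this
      have hwy : w < y := by
        have hmul : (w : ℤ) * z = (y : ℤ) ^ 2 - 1 := by rw [hwzi]; nlinarith
        by_contra h
        push_neg at h
        have h' : (y : ℤ) ≤ w := by exact_mod_cast h
        have h'' : (y : ℤ) ≤ z := by exact_mod_cast hyz
        have hyp : (1 : ℤ) ≤ y := by exact_mod_cast hpos
        nlinarith
      obtain ⟨b, hb, hbw, hby⟩ := ih w hwy y (le_of_lt hwy) hweq
      refine ⟨b + 2, hb.add (by norm_num), hby, ?_⟩
      have h3 := fib3 b
      have e : b + 2 + 2 = b + 4 := by ring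
      rw [e]
      omega

lemma arithA (u1 u2 v1 v2 : ℕ) (h1 : 1 ≤ u1) (h2 : 1 ≤ v1) :
    u2 * (v1 + v2) + (u1 + u2) * (v2 + (v1 + v2)) + (v1 + v2)
      < 3 * (u1 + u2) * (v1 + v2) := by nlinarith

lemma arithB (u1 u2 v1 v2 : ℕ) (hu : u1 ≤ u2) (hv : v1 ≤ v2) :
    3 * (u1 + u2) * (v1 + v2)
      ≤ (u1 + u2) * (v1 + v2) + (u2 + (u1 + u2)) * (v2 + (v1 + v2)) := by nlinarith

/-- The ordered triples `(x, y, z)` of positive integers with `x ≤ y ≤ z`, all Fibonacci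
numbers, satisfying `x² + y² + z² = 3xyz + 2` are exactly the triples
`(1, F(b), F(b+2))` where `b ≥ 2` is an even integer. -/
theorem markoff_fibonacci_two_triples (x y z : ℕ) :
    (0 < x ∧ x ≤ y ∧ y ≤ z ∧ IsFib x ∧ IsFib y ∧ IsFib z ∧
      x ^ 2 + y ^ 2 + z ^ 2 = 3 * x * y * z + 2) ↔
    (∃ b : ℕ, 2 ≤ b ∧ Even b ∧ x = 1 ∧ y = Nat.fib b ∧ z = Nat.fib (b + 2)) := by
  constructor
  · rintro ⟨hx, hxy, hyz, ⟨a, ha⟩, ⟨m, hm⟩, ⟨n, hn⟩, heq⟩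
    have hx1 : x = 1 := by
      by_contra hne
      have hx2 : 2 ≤ x := by omega
      have hy2 : 2 ≤ y := le_trans hx2 hxy
      have ha3 : 3 ≤ a := by
        by_contra h
        have : Nat.fib a ≤ 1 := by interval_cases a <;> simp
        omega
      have hm3 : 3 ≤ m := by
        by_contra h
        have : Nat.fib m ≤ 1 := by interval_cases m <;> simp
        omega
      have heqi : (x : ℤ) ^ 2 + (y : ℤ) ^ 2 + (z : ℤ) ^ 2 = 3 * x * y * z + 2 := by
        exact_mod_cast heq
      have hxyi : (x : ℤ) ≤ y := by exact_mod_cast hxy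
      have hyzi : (y : ℤ) ≤ z := by exact_mod_cast hyz
      have hx2i : (2 : ℤ) ≤ x := by exact_mod_cast hx2
      have h1 : 3 * x * y < z + y := by
        have hint : (3 : ℤ) * x * y < z + y := by
          by_contra h
          push_neg at h
          have p1 : (0 : ℤ) ≤ ((z : ℤ) - y) * (3 * x * y - (z + y)) :=
            mul_nonneg (by linarith) (by linarith)
          have p2 : (0 : ℤ) ≤ ((x : ℤ) - 2) * (y * y) :=
            mul_nonneg (by linarith) (by positivity)
          have p3 : (0 : ℤ) ≤ ((y : ℤ) - x) * (y + x) :=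
            mul_nonneg (by linarith) (by nlinarith)
          nlinarith [p1, p2, p3, sq_nonneg (y : ℤ)]
        exact_mod_cast hint
      have h2 : z < 3 * x * y := by
        have hint : (z : ℤ) < 3 * x * y := by
          by_contra h
          push_neg at h
          have p1 : (0 : ℤ) ≤ (z : ℤ) * (z - 3 * x * y) :=
            mul_nonneg (by linarith) (by linarith)
          nlinarith [p1, hx2i, hxyi, hyzi]
        exact_mod_cast hint
      obtain ⟨p, rfl⟩ : ∃ p, a = p + 3 := ⟨a - 3, by omega⟩
      obtain ⟨q, rfl⟩ : ∃ q, m = q + 3 := ⟨m - 3, by omega⟩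
      have f1 : Nat.fib (p + 3) = Nat.fib (p + 1) + Nat.fib (p + 2) := Nat.fib_add_two
      have f2 : Nat.fib (q + 4) = Nat.fib (q + 2) + Nat.fib (q + 3) := Nat.fib_add_two
      have f3 : Nat.fib (q + 3) = Nat.fib (q + 1) + Nat.fib (q + 2) := Nat.fib_add_two
      have f4 : Nat.fib (p + 4) = Nat.fib (p + 2) + Nat.fib (p + 3) := Nat.fib_add_two
      have g1 : 1 ≤ Nat.fib (p + 1) := Nat.fib_pos.2 (by omega)
      have g2 : 1 ≤ Nat.fib (q + 1) := Nat.fib_pos.2 (by omega)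
      have gm1 : Nat.fib (p + 1) ≤ Nat.fib (p + 2) := Nat.fib_le_fib_succ
      have gm2 : Nat.fib (q + 1) ≤ Nat.fib (q + 2) := Nat.fib_le_fib_succ
      have key1 : Nat.fib (p + 3 + (q + 3)) < z := by
        have hadd : Nat.fib (p + 2 + (q + 3) + 1)
            = Nat.fib (p + 2) * Nat.fib (q + 3) + Nat.fib (p + 3) * Nat.fib (q + 4) :=
          Nat.fib_add (p + 2) (q + 3)
        have e : p + 2 + (q + 3) + 1 = p + 3 + (q + 3) := by ring
        rw [e] at hadd
        have hlt : Nat.fib (p + 3 + (q + 3)) + y < 3 * x * y := by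
          rw [hadd, ← ha, ← hm]
          calc Nat.fib (p + 2) * Nat.fib (q + 3) + Nat.fib (p + 3) * Nat.fib (q + 4)
                + Nat.fib (q + 3)
              = Nat.fib (p + 2) * (Nat.fib (q + 1) + Nat.fib (q + 2))
                + (Nat.fib (p + 1) + Nat.fib (p + 2))
                  * (Nat.fib (q + 2) + (Nat.fib (q + 1) + Nat.fib (q + 2)))
                + (Nat.fib (q + 1) + Nat.fib (q + 2)) := by rw [← f3, ← f2, ← f1]
            _ < 3 * ((Nat.fib (p + 1) + Nat.fib (p + 2))
                  * (Nat.fib (q + 1) + Nat.fib (q + 2))) := by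
                have := arithA (Nat.fib (p + 1)) (Nat.fib (p + 2))
                  (Nat.fib (q + 1)) (Nat.fib (q + 2)) g1 g2
                calc Nat.fib (p + 2) * (Nat.fib (q + 1) + Nat.fib (q + 2))
                      + (Nat.fib (p + 1) + Nat.fib (p + 2))
                        * (Nat.fib (q + 2) + (Nat.fib (q + 1) + Nat.fib (q + 2)))
                      + (Nat.fib (q + 1) + Nat.fib (q + 2))
                    < 3 * (Nat.fib (p + 1) + Nat.fib (p + 2))
                        * (Nat.fib (q + 1) + Nat.fib (q + 2)) := this
                  _ = 3 * ((Nat.fib (p + 1) + Nat.fib (p + 2))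
                        * (Nat.fib (q + 1) + Nat.fib (q + 2))) := by ring
            _ = 3 * (Nat.fib (p + 3) * Nat.fib (q + 3)) := by rw [← f1, ← f3]
            _ = 3 * Nat.fib (p + 3) * Nat.fib (q + 3) := by ring
        omega
      have key2 : z < Nat.fib (p + 3 + (q + 3) + 1) := by
        have hadd : Nat.fib (p + 3 + (q + 3) + 1)
            = Nat.fib (p + 3) * Nat.fib (q + 3) + Nat.fib (p + 4) * Nat.fib (q + 4) :=
          Nat.fib_add (p + 3) (q + 3)
        have hge : 3 * x * y ≤ Nat.fib (p + 3 + (q + 3) + 1) := by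
          rw [hadd, ← ha, ← hm]
          have hb := arithB (Nat.fib (p + 1)) (Nat.fib (p + 2))
            (Nat.fib (q + 1)) (Nat.fib (q + 2)) gm1 gm2
          calc 3 * Nat.fib (p + 3) * Nat.fib (q + 3)
              = 3 * (Nat.fib (p + 1) + Nat.fib (p + 2))
                  * (Nat.fib (q + 1) + Nat.fib (q + 2)) := by rw [← f1, ← f3]
            _ ≤ (Nat.fib (p + 1) + Nat.fib (p + 2)) * (Nat.fib (q + 1) + Nat.fib (q + 2))
                + (Nat.fib (p + 2) + (Nat.fib (p + 1) + Nat.fib (p + 2)))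
                  * (Nat.fib (q + 2) + (Nat.fib (q + 1) + Nat.fib (q + 2))) := hb
            _ = Nat.fib (p + 3) * Nat.fib (q + 3) + Nat.fib (p + 4) * Nat.fib (q + 4) := by
                rw [← f1, ← f3, ← f4, ← f2]
        omega
      have hlt1 : p + 3 + (q + 3) < n := by
        by_contra h
        push_neg at h
        have := Nat.fib_mono h
        omega
      have : Nat.fib (p + 3 + (q + 3) + 1) ≤ Nat.fib n := Nat.fib_mono (by omega)
      omega
    subst hx1
    have heq' : y ^ 2 + z ^ 2 = 3 * y * z + 1 := by nlinarith
    obtain ⟨b, hb, hby, hbz⟩ := pell_solve y z hyz heq'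
    have hb1 : 0 < b := by
      by_contra h
      have hb0 : b = 0 := by omega
      rw [hb0] at hby
      simp at hby
      omega
    have hb2 : 2 ≤ b := by
      rcases hb with ⟨r, hr⟩
      omega
    exact ⟨b, hb2, hb, rfl, hby, hbz⟩
  · rintro ⟨b, hb2, hbeven, rfl, rfl, rfl⟩
    obtain ⟨k, rfl⟩ : ∃ k, b = 2 * k := by rcases hbeven with ⟨r, hr⟩; exact ⟨r, by omega⟩
    have hid := pell_ident k
    have hpos : 0 < Nat.fib (2 * k) := Nat.fib_pos.2 (by omega)
    have hmono : Nat.fib (2 * k) ≤ Nat.fib (2 * k + 2) := Nat.fib_mono (by omega)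
    refine ⟨by norm_num, hpos, hmono, ⟨1, rfl⟩, ⟨2 * k, rfl⟩, ⟨2 * k + 2, rfl⟩, ?_⟩
    nlinarith [hid]
end

section
/- The ordered triples (x, y, z) of positive integers with x ≤ y ≤ z, all Fibonacci numbers, satisfying x² + y² + z² = 3xyz + 21 are exactly (1, 2, 8) and (2, 2, 13). -/
lemma fib_canon {v : ℕ} (h : IsFib v) (h0 : 0 < v) : ∃ a : ℕ, Nat.fib (a + 2) = v := by
  obtain ⟨n, rfl⟩ := h
  match n with
  | 0 => simp at h0
  | 1 => exact ⟨0, rfl⟩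
  | (k+2) => exact ⟨k, rfl⟩

lemma fib_le_48 {v : ℕ} (h : IsFib v) (h0 : 0 < v) (h48 : v ≤ 48) :
    v = 1 ∨ v = 2 ∨ v = 3 ∨ v = 5 ∨ v = 8 ∨ v = 13 ∨ v = 21 ∨ v = 34 := by
  obtain ⟨n, rfl⟩ := h
  have hn : n < 10 := by
    by_contra hn
    have h2 : Nat.fib 10 ≤ Nat.fib n := Nat.fib_mono (by omega)
    have : Nat.fib 10 = 55 := by decide
    omega
  interval_cases n <;> revert h0 <;> decide

lemma cassini (n : ℕ) : ((Nat.fib (n+1)):ℤ)^2 = Nat.fib (n+1) * Nat.fib n + (Nat.fib n:ℤ) ^ 2 + (-1)^n := by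
  induction n with
  | zero => simp
  | succ k ih =>
    have h : (Nat.fib (k+2) : ℤ) = Nat.fib k + Nat.fib (k+1) := by
      exact_mod_cast (Nat.fib_add_two : Nat.fib (k+2) = _)
    rw [h]
    linear_combination -ih

set_option maxHeartbeats 2000000 in
/-- The ordered triples `(x, y, z)` of positive integers with `x ≤ y ≤ z`, all Fibonacci
numbers, satisfying `x² + y² + z² = 3xyz + 21` are exactly `(1, 2, 8)` and `(2, 2, 13)`. -/
theorem markoff_fibonacci_21_triples (x y z : ℕ) :
    (0 < x ∧ x ≤ y ∧ y ≤ z ∧ IsFib x ∧ IsFib y ∧ IsFib z ∧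
      x ^ 2 + y ^ 2 + z ^ 2 = 3 * x * y * z + 21) ↔
    ((x, y, z) = (1, 2, 8) ∨ (x, y, z) = (2, 2, 13)) := by
  constructor
  · rintro ⟨hx0, hxy, hyz, hfx, hfy, hfz, heq⟩
    have hy0 : 0 < y := lt_of_lt_of_le hx0 hxy
    have hz0 : 0 < z := lt_of_lt_of_le hy0 hyz
    by_cases hsmall : x ^ 2 + y ^ 2 ≤ 21
    · -- small branch : finite check
      have hy4 : y ≤ 4 := by
        by_contra h
        push_neg at h
        have h25 : 25 ≤ y * y := Nat.mul_le_mul h h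
        have hx2 : 0 ≤ x * x := Nat.zero_le _
        nlinarith [hsmall, h25]
      have hxy16 : 3 * (x * y) ≤ 48 := by
        have := Nat.mul_le_mul (hxy.trans hy4) hy4
        omega
      have h48 : 3 * (x*y) * z ≤ 48 * z := Nat.mul_le_mul_right z hxy16
      have hz48 : z ≤ 48 := by
        by_contra h
        push_neg at h
        have h49 : 49 * z ≤ z * z := Nat.mul_le_mul_right z (by omega)
        nlinarith [heq, h48, h49]
      rcases fib_le_48 hfx hx0 (by omega) with rfl|rfl|rfl|rfl|rfl|rfl|rfl|rfl <;>
        rcases fib_le_48 hfy hy0 (by omega) with rfl|rfl|rfl|rfl|rfl|rfl|rfl|rfl <;>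
        rcases fib_le_48 hfz hz0 (by omega) with rfl|rfl|rfl|rfl|rfl|rfl|rfl|rfl <;>
        first
          | (left; rfl)
          | (right; rfl)
          | (exfalso; revert heq; decide)
          | omega
    · -- big branch
      push_neg at hsmall
      obtain ⟨a, rfl⟩ := fib_canon hfx hx0
      obtain ⟨b, rfl⟩ := fib_canon hfy hy0
      obtain ⟨n, hn⟩ := hfz
      exfalso
      set X := Nat.fib (a+2) with hXdef
      set Y := Nat.fib (b+2) with hYdef
      -- z > X*Y
      have pxz : X * X ≤ z * z := Nat.mul_le_mul (hxy.trans hyz) (hxy.trans hyz)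
      have pyz : Y * Y ≤ z * z := Nat.mul_le_mul hyz hyz
      have hA : X * Y < z := by
        have h1 : z * (X * Y) < z * z := by linarith [heq, pxz, pyz]
        exact Nat.lt_of_mul_lt_mul_left h1
      have hB : z < 3 * (X * Y) := by
        by_contra h
        push_neg at h
        have p : 3 * (X * Y) * z ≤ z * z := Nat.mul_le_mul_right z h
        linarith [heq, hsmall, p]
      -- lower fib bound
      have hlow : Nat.fib (a+b+2) ≤ X * Y := by
        have h := Nat.fib_add a (b+1)
        rw [show a+(b+1)+1 = a+b+2 by ring] at h
        have hm : Nat.fib a * Nat.fib (b+1) ≤ Nat.fib a * Y :=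
          mul_le_mul_right Nat.fib_le_fib_succ _
        have h2 : X * Y = Nat.fib a * Y + Nat.fib (a+1) * Y := by
          rw [show X = Nat.fib a + Nat.fib (a+1) from Nat.fib_add_two]; ring
        linarith [h, hm, h2]
      -- upper fib bound
      have hhigh : 3 * (X * Y) ≤ Nat.fib (a+b+5) := by
        have h := Nat.fib_add (a+2) (b+2)
        rw [show a+2+(b+2)+1 = a+b+5 by ring] at h
        have ha2 : 3 * X ≤ 2 * Nat.fib (a+3) := by
          have h1 : Nat.fib (a+3) = Nat.fib (a+1) + Nat.fib (a+2) := Nat.fib_add_two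
          have h2 : X = Nat.fib a + Nat.fib (a+1) := Nat.fib_add_two
          have h3 : Nat.fib a ≤ Nat.fib (a+1) := Nat.fib_le_fib_succ
          omega
        have hb2 : 3 * Y ≤ 2 * Nat.fib (b+3) := by
          have h1 : Nat.fib (b+3) = Nat.fib (b+1) + Nat.fib (b+2) := Nat.fib_add_two
          have h2 : Y = Nat.fib b + Nat.fib (b+1) := Nat.fib_add_two
          have h3 : Nat.fib b ≤ Nat.fib (b+1) := Nat.fib_le_fib_succ
          omega
        have hp : (3*X) * (3*Y) ≤ (2 * Nat.fib (a+3)) * (2 * Nat.fib (b+3)) := Nat.mul_le_mul ha2 hb2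
        linarith [h, hp]
      -- pin down n
      have hn1 : a+b+3 ≤ n := by
        by_contra h
        push_neg at h
        have h2 : Nat.fib n ≤ Nat.fib (a+b+2) := Nat.fib_mono (by omega)
        linarith [hn, h2, hlow, hA]
      have hn2 : n ≤ a+b+4 := by
        by_contra h
        push_neg at h
        have h2 : Nat.fib (a+b+5) ≤ Nat.fib n := Nat.fib_mono (by omega)
        linarith [hn, h2, hhigh, hB]
      rcases (by omega : n = a+b+3 ∨ n = a+b+4) with rfl | rfl
      · -- z = fib (a+b+3)
        have h := Nat.fib_add (a+1) (b+1)
        rw [show a+1+(b+1)+1 = a+b+3 by ring, show a+1+1 = a+2 by ring,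
          show b+1+1 = b+2 by ring] at h
        rw [← hXdef, ← hYdef] at h
        set Q := Nat.fib (a+1) * Nat.fib (b+1) with hQdef
        have hz' : z = Q + X * Y := by omega
        subst hz'
        have hQ : Q ≤ X * Y := Nat.mul_le_mul Nat.fib_le_fib_succ Nat.fib_le_fib_succ
        have f1 : Q * Q ≤ (X * Y) * Q := Nat.mul_le_mul_right Q hQ
        have hYle : Y ≤ X * Y := Nat.le_mul_of_pos_left Y hx0
        have hXle : X ≤ X * Y := by
          calc X ≤ Y := hxy
          _ ≤ X * Y := hYle
        have f2 : Y * Y ≤ (X*Y) * (X*Y) := Nat.mul_le_mul hYle hYle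
        have f3 : X * X ≤ (X*Y) * (X*Y) := Nat.mul_le_mul hXle hXle
        linarith [heq, f1, f2, f3]
      · -- z = fib (a+b+4)
        have h4 := Nat.fib_add (a+1) (b+2)
        rw [show a+1+(b+2)+1 = a+b+4 by ring, show a+1+1 = a+2 by ring,
          show b+2+1 = b+3 by ring] at h4
        rw [← hXdef, ← hYdef] at h4
        have ea : X = Nat.fib a + Nat.fib (a+1) := Nat.fib_add_two
        have eb : Y = Nat.fib b + Nat.fib (b+1) := Nat.fib_add_two
        have eb3 : Nat.fib (b+3) = Nat.fib (b+1) + Y := Nat.fib_add_two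
        have identity3 : 3 * (X * Y)
            = Nat.fib (a+b+4) + X * Nat.fib b + Nat.fib a * Y := by
          rw [h4, eb3, ea, eb]; ring
        rcases Nat.eq_zero_or_pos a with rfl | hapos
        · -- a = 0 : x = 1
          have hX1 : X = 1 := rfl
          have h0b : 0+b+4 = b+4 := by omega
          rw [h0b] at identity3 hn
          have i3 : 3 * Y = Nat.fib (b+4) + Nat.fib b := by
            rw [hX1] at identity3
            simpa using identity3
          have hz' : z = Nat.fib (b+4) := hn.symm
          subst hz'
          have key : ((Y:ℤ))^2 = (Nat.fib (b+4) : ℤ) * Nat.fib b + 20 := by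
            have heq' : (1:ℤ) + (Y:ℤ)^2 + (Nat.fib (b+4):ℤ)^2
                = 3 * Y * Nat.fib (b+4) + 21 := by
              rw [hX1] at heq; exact_mod_cast heq
            have i3' : (3:ℤ) * Y = (Nat.fib (b+4):ℤ) + Nat.fib b := by exact_mod_cast i3
            linear_combination heq' + (Nat.fib (b+4) : ℤ) * i3'
          have e1 : (Y:ℤ) = (Nat.fib b : ℤ) + Nat.fib (b+1) := by exact_mod_cast eb
          have e2 : (Nat.fib (b+4) : ℤ) = 2 * Nat.fib b + 3 * Nat.fib (b+1) := by
            have u1 : Nat.fib (b+4) = Nat.fib (b+2) + Nat.fib (b+3) := Nat.fib_add_two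
            have u2 : Nat.fib (b+3) = Nat.fib (b+1) + Nat.fib (b+2) := Nat.fib_add_two
            have u3 : Nat.fib (b+2) = Nat.fib b + Nat.fib (b+1) := Nat.fib_add_two
            omega
          rw [e1, e2] at key
          have h20 : ((-1:ℤ))^b = 20 := by linear_combination key - cassini b
          rcases neg_one_pow_eq_or ℤ b with hpow | hpow <;> rw [hpow] at h20 <;>
            norm_num at h20
        · -- a ≥ 1
          have hfa : 1 ≤ Nat.fib a := Nat.fib_pos.mpr hapos
          have hX2 : 2 ≤ X := by
            have h3 : Nat.fib 3 ≤ Nat.fib (a+2) := Nat.fib_mono (by omega)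
            rw [hXdef]; exact le_trans (by decide) h3
          have h1 : Y ≤ Nat.fib a * Y := Nat.le_mul_of_pos_left Y (by omega : 0 < Nat.fib a)
          have hge : z + Y ≤ 3 * (X * Y) := by
            rw [identity3]
            omega
          have p1 : (z + Y) * z ≤ 3 * (X * Y) * z := Nat.mul_le_mul_right z hge
          have hA' : X * Y + 1 ≤ z := hA
          have p2 : Y * (X * Y + 1) ≤ Y * z := mul_le_mul_right hA' Y
          have p3 : 2 * (Y * Y) ≤ X * (Y * Y) := Nat.mul_le_mul_right (Y*Y) hX2
          have p4 : X * X ≤ Y * Y := Nat.mul_le_mul hxy hxy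
          linarith [heq, p1, p2, p3, p4]
  · rintro (h | h) <;> rw [Prod.mk.injEq, Prod.mk.injEq] at h <;>
      obtain ⟨rfl, rfl, rfl⟩ := h
    · exact ⟨by norm_num, by norm_num, by norm_num, ⟨1, rfl⟩, ⟨3, rfl⟩, ⟨6, rfl⟩, by norm_num⟩
    · exact ⟨by norm_num, by norm_num, by norm_num, ⟨3, rfl⟩, ⟨3, rfl⟩, ⟨7, rfl⟩, by norm_num⟩
end

section
/- There exist infinitely many positive integers m for which the equation x² + y² + z² = 3xyz + m admits a solution (x, y, z) in positive integers with x ≤ y ≤ z, all of x, y, z Fibonacci numbers, and moreover satisfying the minimality condition z ≥ 3xy. -/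
lemma fib_ge_three (n : ℕ) : 3 ≤ Nat.fib (n + 4) := by
  calc 3 = Nat.fib 4 := rfl
  _ ≤ Nat.fib (n + 4) := Nat.fib_mono (by omega)

lemma fib_mono4 {a b : ℕ} (h : a < b) : Nat.fib (a + 4) < Nat.fib (b + 4) :=
  (Nat.fib_lt_fib_succ (n := a + 4) (by omega)).trans_le (Nat.fib_mono (by omega))

/-- There exist infinitely many positive integers `m` for which the equation
`x² + y² + z² = 3xyz + m` admits a solution `(x, y, z)` in positive integers with
`x ≤ y ≤ z`, all of `x, y, z` Fibonacci numbers, and moreover satisfying the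
minimality condition `z ≥ 3xy`. -/
theorem infinitely_many_m_with_minimal_fibonacci_solution :
    {m : ℕ | 0 < m ∧ ∃ x y z : ℕ, 0 < x ∧ x ≤ y ∧ y ≤ z ∧
      IsFib x ∧ IsFib y ∧ IsFib z ∧
      x ^ 2 + y ^ 2 + z ^ 2 = 3 * x * y * z + m ∧ 3 * x * y ≤ z}.Infinite := by
  apply Set.infinite_of_injective_forall_mem
    (f := fun n : ℕ => (Nat.fib (n + 4) - 1) * (Nat.fib (n + 4) - 2))
  · intro a b hab
    by_contra hne
    wlog h : a < b generalizing a b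
    · exact this hab.symm (Ne.symm hne) (by omega)
    have h3a := fib_ge_three a
    have h3b := fib_ge_three b
    have := fib_mono4 h
    simp only at hab
    have : (Nat.fib (a + 4) - 1) * (Nat.fib (a + 4) - 2)
        < (Nat.fib (b + 4) - 1) * (Nat.fib (b + 4) - 2) :=
      Nat.mul_lt_mul'' (by omega) (by omega)
    omega
  · intro n
    have h3 := fib_ge_three n
    refine ⟨Nat.mul_pos (by omega) (by omega), 1, 1, Nat.fib (n + 4), one_pos, le_refl _, by omega,
      ⟨1, rfl⟩, ⟨1, rfl⟩, ⟨n + 4, rfl⟩, ?_, by omega⟩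
    have : Nat.fib (n + 4) - 1 ≥ 2 := by omega
    zify [show 1 ≤ Nat.fib (n+4) by omega, show 2 ≤ Nat.fib (n+4) by omega]
    ring
end

section
/- For all integers a, b, c ≥ 2, the inequality F(c) ≤ 3·F(a)·F(b) holds if and only if c ≤ a + b (equivalently, F(c) > 3·F(a)·F(b) holds if and only if c ≥ a + b + 1). -/
private lemma fib_succ_le_two (n : ℕ) : Nat.fib (n + 3) ≤ 2 * Nat.fib (n + 2) := by
  have h1 : Nat.fib (n + 3) = Nat.fib (n + 1) + Nat.fib (n + 2) := Nat.fib_add_two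
  have h2 : Nat.fib (n + 1) ≤ Nat.fib (n + 2) := Nat.fib_le_fib_succ
  omega

private lemma three_fib_le (n : ℕ) : 3 * Nat.fib (n + 2) ≤ 2 * Nat.fib (n + 3) := by
  have h1 : Nat.fib (n + 3) = Nat.fib (n + 1) + Nat.fib (n + 2) := Nat.fib_add_two
  have h2 : Nat.fib (n + 2) = Nat.fib n + Nat.fib (n + 1) := Nat.fib_add_two
  have h3 : Nat.fib n ≤ Nat.fib (n + 1) := Nat.fib_le_fib_succ
  omega

/-- For all integers `a, b, c ≥ 2`, the inequality `F(c) ≤ 3·F(a)·F(b)` holds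
if and only if `c ≤ a + b`. -/
theorem fib_le_three_mul_iff (a b c : ℕ) (ha : 2 ≤ a) (hb : 2 ≤ b) (hc : 2 ≤ c) :
    Nat.fib c ≤ 3 * Nat.fib a * Nat.fib b ↔ c ≤ a + b := by
  obtain ⟨m, rfl⟩ : ∃ m, a = m + 2 := ⟨a - 2, by omega⟩
  obtain ⟨n, rfl⟩ : ∃ n, b = n + 2 := ⟨b - 2, by omega⟩
  set A := Nat.fib (m + 2) with hA
  set B := Nat.fib (n + 2) with hB
  -- upper bound: fib (a+b) ≤ 3 A B
  have hupper : Nat.fib (m + 2 + (n + 2)) ≤ 3 * A * B := by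
    have hid : Nat.fib (m + 1 + (n + 2) + 1) =
        Nat.fib (m + 1) * Nat.fib (n + 2) + Nat.fib (m + 2) * Nat.fib (n + 3) :=
      Nat.fib_add (m + 1) (n + 2)
    have h1 : Nat.fib (m + 1) ≤ A := Nat.fib_le_fib_succ
    have h2 : Nat.fib (n + 3) ≤ 2 * B := fib_succ_le_two n
    have heq : m + 1 + (n + 2) + 1 = m + 2 + (n + 2) := by omega
    rw [heq] at hid
    calc Nat.fib (m + 2 + (n + 2)) = Nat.fib (m + 1) * B + A * Nat.fib (n + 3) := hid
      _ ≤ A * B + A * (2 * B) := by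
          exact Nat.add_le_add (Nat.mul_le_mul_right _ h1) (Nat.mul_le_mul_left _ h2)
      _ = 3 * A * B := by ring
  -- lower bound: 3 A B < fib (a+b+1)
  have hlower : 3 * A * B < Nat.fib (m + 2 + (n + 2) + 1) := by
    have hid : Nat.fib (m + 2 + (n + 2) + 1) =
        Nat.fib (m + 2) * Nat.fib (n + 2) + Nat.fib (m + 3) * Nat.fib (n + 3) :=
      Nat.fib_add (m + 2) (n + 2)
    have h1 : 3 * A ≤ 2 * Nat.fib (m + 3) := three_fib_le m
    have h2 : 3 * B ≤ 2 * Nat.fib (n + 3) := three_fib_le n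
    have hApos : 1 ≤ A := by
      have := Nat.fib_pos.mpr (show 0 < m + 2 by omega); omega
    have hBpos : 1 ≤ B := by
      have := Nat.fib_pos.mpr (show 0 < n + 2 by omega); omega
    have h3 : (3 * A) * (3 * B) ≤ (2 * Nat.fib (m + 3)) * (2 * Nat.fib (n + 3)) :=
      Nat.mul_le_mul h1 h2
    have h4 : 2 * (A * B) < Nat.fib (m + 3) * Nat.fib (n + 3) := by nlinarith
    calc 3 * A * B = A * B + 2 * (A * B) := by ring
      _ < A * B + Nat.fib (m + 3) * Nat.fib (n + 3) := by omega
      _ = Nat.fib (m + 2 + (n + 2) + 1) := hid.symm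
  constructor
  · intro h
    by_contra hcon
    have hc' : m + 2 + (n + 2) + 1 ≤ c := by omega
    have := Nat.fib_mono hc'
    omega
  · intro h
    have := Nat.fib_mono h
    omega
end

section
/- For integers a, b, c ≥ 2, the equality F(c) = 3·F(a)·F(b) holds if and only if a = 2, b = 2 and c = 4. -/
open Nat

lemma fib_aux_le (x y : ℕ) :
    Nat.fib (x + y + 4) ≤ 3 * Nat.fib (x + 2) * Nat.fib (y + 2) := by
  have h1 : Nat.fib ((x+1) + (y+2) + 1) =
      Nat.fib (x+1) * Nat.fib (y+2) + Nat.fib (x+2) * Nat.fib (y+3) := Nat.fib_add _ _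
  have e : (x+1) + (y+2) + 1 = x + y + 4 := by ring
  rw [e] at h1
  have h2 : Nat.fib (x+1) ≤ Nat.fib (x+2) := Nat.fib_mono (by omega)
  have h3 : Nat.fib (y+3) = Nat.fib (y+2) + Nat.fib (y+1) := by
    rw [Nat.fib_add_two]; ring
  have h4 : Nat.fib (y+1) ≤ Nat.fib (y+2) := Nat.fib_mono (by omega)
  nlinarith [Nat.fib_pos.mpr (show 0 < y+2 by omega)]

lemma fib_aux_lt (x y : ℕ) (h : 0 < x ∨ 0 < y) :
    Nat.fib (x + y + 4) < 3 * Nat.fib (x + 2) * Nat.fib (y + 2) := by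
  have h1 : Nat.fib ((x+1) + (y+2) + 1) =
      Nat.fib (x+1) * Nat.fib (y+2) + Nat.fib (x+2) * Nat.fib (y+3) := Nat.fib_add _ _
  have e : (x+1) + (y+2) + 1 = x + y + 4 := by ring
  rw [e] at h1
  have h3 : Nat.fib (y+3) = Nat.fib (y+2) + Nat.fib (y+1) := by
    rw [Nat.fib_add_two]; ring
  have px : 0 < Nat.fib (x+2) := Nat.fib_pos.mpr (by omega)
  have py : 0 < Nat.fib (y+2) := Nat.fib_pos.mpr (by omega)
  rcases h with hx | hy
  · have h2 : Nat.fib (x+1) < Nat.fib (x+2) := by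
      have := Nat.fib_lt_fib_succ (show 2 ≤ x+1 by omega)
      simpa using this
    have h4 : Nat.fib (y+1) ≤ Nat.fib (y+2) := Nat.fib_mono (by omega)
    nlinarith
  · have h2 : Nat.fib (x+1) ≤ Nat.fib (x+2) := Nat.fib_mono (by omega)
    have h4 : Nat.fib (y+1) < Nat.fib (y+2) := by
      have := Nat.fib_lt_fib_succ (show 2 ≤ y+1 by omega)
      simpa using this
    nlinarith

lemma fib_two_mul_succ (x : ℕ) : 3 * Nat.fib (x+2) ≤ 2 * Nat.fib (x+3) := by
  have h1 : Nat.fib (x+3) = Nat.fib (x+2) + Nat.fib (x+1) := by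
    rw [Nat.fib_add_two]; ring
  have h2 : Nat.fib (x+2) = Nat.fib (x+1) + Nat.fib x := by
    rw [Nat.fib_add_two]; ring
  have h3 : Nat.fib x ≤ Nat.fib (x+1) := Nat.fib_mono (by omega)
  omega

lemma fib_aux_upper (x y : ℕ) :
    3 * Nat.fib (x + 2) * Nat.fib (y + 2) < Nat.fib (x + y + 5) := by
  have h1 : Nat.fib ((x+2) + (y+2) + 1) =
      Nat.fib (x+2) * Nat.fib (y+2) + Nat.fib (x+3) * Nat.fib (y+3) := Nat.fib_add _ _
  have e : (x+2) + (y+2) + 1 = x + y + 5 := by ring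
  rw [e] at h1
  have hx := fib_two_mul_succ x
  have hy := fib_two_mul_succ y
  have px : 0 < Nat.fib (x+2) := Nat.fib_pos.mpr (by omega)
  have py : 0 < Nat.fib (y+2) := Nat.fib_pos.mpr (by omega)
  nlinarith

/-- For integers `a, b, c ≥ 2`, the equality `F(c) = 3·F(a)·F(b)` holds if and only if
`a = 2`, `b = 2` and `c = 4`. -/
theorem fib_eq_three_mul_iff (a b c : ℕ) (ha : 2 ≤ a) (hb : 2 ≤ b) (hc : 2 ≤ c) :
    Nat.fib c = 3 * Nat.fib a * Nat.fib b ↔ a = 2 ∧ b = 2 ∧ c = 4 := by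
  constructor
  · intro h
    obtain ⟨x, rfl⟩ : ∃ x, a = x + 2 := ⟨a - 2, by omega⟩
    obtain ⟨y, rfl⟩ : ∃ y, b = y + 2 := ⟨b - 2, by omega⟩
    have hle : Nat.fib (x + y + 4) ≤ Nat.fib c := h ▸ fib_aux_le x y
    have hlt : Nat.fib c < Nat.fib (x + y + 5) := h ▸ fib_aux_upper x y
    have hc1 : x + y + 4 ≤ c := by
      by_contra hcon
      push_neg at hcon
      have : Nat.fib c ≤ Nat.fib (x + y + 3) := Nat.fib_mono (by omega)
      have : Nat.fib (x + y + 3) < Nat.fib (x + y + 4) := by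
        have := Nat.fib_lt_fib_succ (show 2 ≤ x + y + 3 by omega)
        simpa using this
      omega
    have hc2 : c < x + y + 5 := by
      by_contra hcon
      push_neg at hcon
      have : Nat.fib (x + y + 5) ≤ Nat.fib c := Nat.fib_mono (by omega)
      omega
    have hce : c = x + y + 4 := by omega
    subst hce
    have hxy : ¬ (0 < x ∨ 0 < y) := by
      intro hor
      have := fib_aux_lt x y hor
      omega
    push_neg at hxy
    obtain ⟨hx0, hy0⟩ := hxy
    omega
  · rintro ⟨rfl, rfl, rfl⟩
    decide
end

section
/- If a, b, c are integers with 3 ≤ a ≤ b ≤ c ≤ a + b, then m(a,b,c) < 0. -/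
/-- `mF a b c = F(a)² + F(b)² + F(c)² − 3·F(a)·F(b)·F(c)` as an integer. -/
def mF (a b c : ℕ) : ℤ :=
  (Nat.fib a : ℤ) ^ 2 + (Nat.fib b : ℤ) ^ 2 + (Nat.fib c : ℤ) ^ 2 -
    3 * (Nat.fib a : ℤ) * (Nat.fib b : ℤ) * (Nat.fib c : ℤ)

lemma fib_ab_bound (a b : ℕ) (ha : 3 ≤ a) (hab : a ≤ b) :
    (Nat.fib (a + b) : ℤ) ≤
      3 * ((Nat.fib a : ℤ) * (Nat.fib b : ℤ)) - Nat.fib a - Nat.fib b := by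
  have hb3 : 3 ≤ b := le_trans ha hab
  have h1 : a + b = (a - 1) + b + 1 := by omega
  have hadd := Nat.fib_add (a - 1) b
  rw [show a - 1 + 1 = a from by omega] at hadd
  rw [h1, hadd]
  -- fib (a-1) + 1 ≤ fib a
  have ha2 : Nat.fib (a - 1) + 1 ≤ Nat.fib a := by
    have e := Nat.fib_add_two (n := a - 2)
    rw [show a - 2 + 2 = a from by omega, show a - 2 + 1 = a - 1 from by omega] at e
    have h1 : 1 ≤ Nat.fib (a - 2) := Nat.fib_pos.mpr (by omega)
    omega
  have hb2 : Nat.fib (b + 1) + 1 ≤ 2 * Nat.fib b := by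
    have e1 := Nat.fib_add_two (n := b - 1)
    rw [show b - 1 + 2 = b + 1 from by omega, show b - 1 + 1 = b from by omega] at e1
    have e2 := Nat.fib_add_two (n := b - 2)
    rw [show b - 2 + 2 = b from by omega, show b - 2 + 1 = b - 1 from by omega] at e2
    have h1 : 1 ≤ Nat.fib (b - 2) := Nat.fib_pos.mpr (by omega)
    omega
  have hfa : 1 ≤ Nat.fib a := Nat.fib_pos.mpr (by omega)
  have hfb : 1 ≤ Nat.fib b := Nat.fib_pos.mpr (by omega)
  have ha2' : (Nat.fib (a - 1) : ℤ) ≤ (Nat.fib a : ℤ) - 1 := by omega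
  have hb2' : (Nat.fib (b + 1) : ℤ) ≤ 2 * (Nat.fib b : ℤ) - 1 := by omega
  have hfa' : (1 : ℤ) ≤ (Nat.fib a : ℤ) := by exact_mod_cast hfa
  have hfb' : (1 : ℤ) ≤ (Nat.fib b : ℤ) := by exact_mod_cast hfb
  push_cast
  nlinarith [mul_nonneg (by linarith : (0:ℤ) ≤ (Nat.fib a : ℤ) - 1 - (Nat.fib (a-1) : ℤ))
      (by linarith : (0:ℤ) ≤ (Nat.fib b : ℤ)),
    mul_nonneg (by linarith : (0:ℤ) ≤ (Nat.fib a : ℤ))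
      (by linarith : (0:ℤ) ≤ 2 * (Nat.fib b : ℤ) - 1 - (Nat.fib (b+1) : ℤ))]

/-- If `3 ≤ a ≤ b ≤ c ≤ a + b`, then `m(a,b,c) < 0`. -/
theorem mF_neg (a b c : ℕ) (ha : 3 ≤ a) (hab : a ≤ b) (hbc : b ≤ c)
    (hc : c ≤ a + b) : mF a b c < 0 := by
  unfold mF
  set x : ℤ := (Nat.fib a : ℤ) with hx
  set y : ℤ := (Nat.fib b : ℤ) with hy
  set z : ℤ := (Nat.fib c : ℤ) with hz
  have h2x : 2 ≤ x := by
    have h : Nat.fib 3 ≤ Nat.fib a := Nat.fib_mono ha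
    have h3 : Nat.fib 3 = 2 := by decide
    rw [hx]; exact_mod_cast h3 ▸ h
  have hxy : x ≤ y := by rw [hx, hy]; exact_mod_cast Nat.fib_mono hab
  have hyz : y ≤ z := by rw [hy, hz]; exact_mod_cast Nat.fib_mono hbc
  have hzb : z ≤ 3 * (x * y) - x - y := by
    have h1 : (Nat.fib c : ℤ) ≤ (Nat.fib (a + b) : ℤ) := by
      exact_mod_cast Nat.fib_mono hc
    have h2 := fib_ab_bound a b ha hab
    rw [hx, hy, hz]; linarith
  nlinarith [mul_nonneg (sub_nonneg.mpr hyz) (sub_nonneg.mpr hzb),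
    mul_pos (by linarith : (0:ℤ) < x) (by linarith : (0:ℤ) < y),
    sq_nonneg (x - y), sq_nonneg (y - z),
    mul_nonneg (sub_nonneg.mpr hxy) (sub_nonneg.mpr hyz)]
end

section
/- Let a, b, c be integers with 2 ≤ a ≤ b ≤ c and m(a,b,c) > 0. Then F(c) ≥ 3·F(a)·F(b) if and only if either c ≥ a + b + 1 or (a, b, c) = (2, 2, 4). -/
lemma fib_eq_prev_add (n : ℕ) (hn : 2 ≤ n) :
    Nat.fib n = Nat.fib (n - 1) + Nat.fib (n - 2) := by
  have := Nat.fib_add_two (n := n - 2)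
  rw [show n - 2 + 2 = n by omega, show n - 2 + 1 = n - 1 by omega] at this
  omega

lemma two_fib_succ (n : ℕ) (hn : 2 ≤ n) : 3 * Nat.fib n ≤ 2 * Nat.fib (n + 1) := by
  have h1 := fib_eq_prev_add n hn
  have h2 : Nat.fib (n + 1) = Nat.fib n + Nat.fib (n - 1) := by
    have := Nat.fib_add_two (n := n - 1)
    rw [show n - 1 + 2 = n + 1 by omega, show n - 1 + 1 = n by omega] at this
    omega
  have h3 : Nat.fib (n - 2) ≤ Nat.fib (n - 1) := Nat.fib_mono (by omega)
  omega

lemma eq_two_of_fib_pred_eq (n : ℕ) (hn : 2 ≤ n) (h : Nat.fib (n - 1) = Nat.fib n) :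
    n = 2 := by
  by_contra h'
  have h3 : 3 ≤ n := by omega
  have := Nat.fib_lt_fib_succ (show 2 ≤ n - 1 by omega)
  rw [show n - 1 + 1 = n by omega] at this
  omega

/-- Let `2 ≤ a ≤ b ≤ c` with `m(a,b,c) > 0`. Then `F(c) ≥ 3·F(a)·F(b)` if and only if
either `c ≥ a + b + 1` or `(a, b, c) = (2, 2, 4)`. -/
theorem markoff_fib_minimal_iff (a b c : ℕ) (ha : 2 ≤ a) (hab : a ≤ b) (hbc : b ≤ c)
    (hm : 0 < mF a b c) :
    3 * Nat.fib a * Nat.fib b ≤ Nat.fib c ↔ (a + b + 1 ≤ c ∨ (a = 2 ∧ b = 2 ∧ c = 4)) := by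
  have hb : 2 ≤ b := le_trans ha hab
  have hApos : 0 < Nat.fib a := Nat.fib_pos.mpr (by omega)
  have hBpos : 0 < Nat.fib b := Nat.fib_pos.mpr (by omega)
  constructor
  · intro h
    by_contra hcon
    push_neg at hcon
    obtain ⟨hc1, h2⟩ := hcon
    have hc : c ≤ a + b := by omega
    have hfab : Nat.fib (a + b) = Nat.fib (a - 1) * Nat.fib b + Nat.fib a * Nat.fib (b + 1) := by
      have := Nat.fib_add (a - 1) b
      rw [show a - 1 + b + 1 = a + b by omega, show a - 1 + 1 = a by omega] at this
      exact this
    have hfb1 : Nat.fib (b + 1) = Nat.fib b + Nat.fib (b - 1) := by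
      have := Nat.fib_add_two (n := b - 1)
      rw [show b - 1 + 2 = b + 1 by omega, show b - 1 + 1 = b by omega] at this
      omega
    have h1 : Nat.fib c ≤ Nat.fib (a + b) := Nat.fib_mono hc
    have hA' : Nat.fib (a - 1) ≤ Nat.fib a := Nat.fib_mono (by omega)
    have hB' : Nat.fib (b - 1) ≤ Nat.fib b := Nat.fib_mono (by omega)
    -- chain: 3AB ≤ fib c ≤ A'B + A(B + B')
    have hchain : 3 * Nat.fib a * Nat.fib b ≤
        Nat.fib (a - 1) * Nat.fib b + Nat.fib a * (Nat.fib b + Nat.fib (b - 1)) := by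
      calc 3 * Nat.fib a * Nat.fib b ≤ Nat.fib c := h
        _ ≤ Nat.fib (a + b) := h1
        _ = _ := by rw [hfab, hfb1]
    have hA'B : Nat.fib (a - 1) * Nat.fib b ≤ Nat.fib a * Nat.fib b :=
      Nat.mul_le_mul_right _ hA'
    have hAB' : Nat.fib a * Nat.fib (b - 1) ≤ Nat.fib a * Nat.fib b :=
      Nat.mul_le_mul_left _ hB'
    have heqA : Nat.fib (a - 1) * Nat.fib b = Nat.fib a * Nat.fib b := by nlinarith
    have heqB : Nat.fib a * Nat.fib (b - 1) = Nat.fib a * Nat.fib b := by nlinarith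
    have ha2 : a = 2 := eq_two_of_fib_pred_eq a ha
      (Nat.eq_of_mul_eq_mul_right hBpos heqA)
    have hb2 : b = 2 := eq_two_of_fib_pred_eq b hb
      (Nat.eq_of_mul_eq_mul_left hApos heqB)
    subst ha2; subst hb2
    interval_cases c
    · exact absurd h (by decide)
    · exact absurd h (by decide)
    · exact h2 rfl rfl rfl
  · rintro (hc | ⟨ha2, hb2, hc4⟩)
    · have h2a := two_fib_succ a ha
      have h2b := two_fib_succ b hb
      have hfab : Nat.fib (a + b + 1) =
          Nat.fib a * Nat.fib b + Nat.fib (a + 1) * Nat.fib (b + 1) := Nat.fib_add a b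
      have h4 : 9 * (Nat.fib a * Nat.fib b) ≤ 4 * (Nat.fib (a + 1) * Nat.fib (b + 1)) := by
        calc 9 * (Nat.fib a * Nat.fib b) = (3 * Nat.fib a) * (3 * Nat.fib b) := by ring
          _ ≤ (2 * Nat.fib (a + 1)) * (2 * Nat.fib (b + 1)) := Nat.mul_le_mul h2a h2b
          _ = 4 * (Nat.fib (a + 1) * Nat.fib (b + 1)) := by ring
      have key : 3 * Nat.fib a * Nat.fib b ≤ Nat.fib (a + b + 1) := by
        rw [hfab, show 3 * Nat.fib a * Nat.fib b = 3 * (Nat.fib a * Nat.fib b) from by ring]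
        linarith
      exact le_trans key (Nat.fib_mono hc)
    · subst ha2; subst hb2; subst hc4; decide
end

section
/- Let a, b, c, a', b' be integers with 2 ≤ a ≤ b ≤ c, c ≥ 5, a ≤ a' ≤ c and b ≤ b' ≤ c. Then m(a,b,c) ≥ m(a',b',c), with equality if and only if a = a' and b = b'. -/
lemma fib_strict_aux {m n : ℕ} (h2 : 2 ≤ m) (h : m < n) : Nat.fib m < Nat.fib n :=
  lt_of_lt_of_le (Nat.fib_lt_fib_succ h2) (Nat.fib_mono h)

/-- Let `2 ≤ a ≤ b ≤ c`, `c ≥ 5`, `a ≤ a' ≤ c` and `b ≤ b' ≤ c`. Then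
`m(a,b,c) ≥ m(a',b',c)`, with equality if and only if `a = a'` and `b = b'`. -/
theorem mF_monotone (a b c a' b' : ℕ) (ha : 2 ≤ a) (hab : a ≤ b) (hbc : b ≤ c)
    (hc : 5 ≤ c) (haa' : a ≤ a') (ha'c : a' ≤ c) (hbb' : b ≤ b') (hb'c : b' ≤ c) :
    mF a' b' c ≤ mF a b c ∧ (mF a b c = mF a' b' c ↔ a = a' ∧ b = b') := by
  set A : ℤ := (Nat.fib a : ℤ) with hAdef
  set B : ℤ := (Nat.fib b : ℤ) with hBdef
  set C : ℤ := (Nat.fib c : ℤ) with hCdef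
  set A' : ℤ := (Nat.fib a' : ℤ) with hA'def
  set B' : ℤ := (Nat.fib b' : ℤ) with hB'def
  have hAA' : A ≤ A' := by rw [hAdef, hA'def]; exact_mod_cast Nat.fib_mono haa'
  have hBB' : B ≤ B' := by rw [hBdef, hB'def]; exact_mod_cast Nat.fib_mono hbb'
  have hA'C : A' ≤ C := by rw [hA'def, hCdef]; exact_mod_cast Nat.fib_mono ha'c
  have hB'C : B' ≤ C := by rw [hB'def, hCdef]; exact_mod_cast Nat.fib_mono hb'c
  have hBC : B ≤ C := by rw [hBdef, hCdef]; exact_mod_cast Nat.fib_mono hbc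
  have hA1 : 1 ≤ A := by
    rw [hAdef]; exact_mod_cast Nat.fib_pos.mpr (by omega : 0 < a)
  have hB1 : 1 ≤ B := by
    rw [hBdef]; exact_mod_cast Nat.fib_pos.mpr (by omega : 0 < b)
  have hA'1 : 1 ≤ A' := le_trans hA1 hAA'
  have hC5 : (5 : ℤ) ≤ C := by
    rw [hCdef]
    have h5 : (5 : ℕ) = Nat.fib 5 := by decide
    exact_mod_cast h5 ▸ Nat.fib_mono hc
  have hAC : A ≤ C := le_trans hAA' hA'C
  have key : mF a b c - mF a' b' c
      = (A' - A) * (3 * B * C - A - A') + (B' - B) * (3 * A' * C - B - B') := by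
    simp only [mF, ← hAdef, ← hBdef, ← hCdef, ← hA'def, ← hB'def]; ring
  have h1 : 0 < 3 * B * C - A - A' := by nlinarith
  have h2 : 0 < 3 * A' * C - B - B' := by nlinarith
  have t1 : 0 ≤ (A' - A) * (3 * B * C - A - A') :=
    mul_nonneg (by linarith) (le_of_lt h1)
  have t2 : 0 ≤ (B' - B) * (3 * A' * C - B - B') :=
    mul_nonneg (by linarith) (le_of_lt h2)
  refine ⟨by linarith, ?_, ?_⟩
  · intro heq
    have hz : (A' - A) * (3 * B * C - A - A') + (B' - B) * (3 * A' * C - B - B') = 0 := by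
      rw [← key]; linarith
    have z1 : (A' - A) * (3 * B * C - A - A') = 0 := by linarith
    have z2 : (B' - B) * (3 * A' * C - B - B') = 0 := by linarith
    have eA : A = A' := by
      rcases mul_eq_zero.mp z1 with h | h
      · linarith
      · exfalso; linarith
    have eB : B = B' := by
      rcases mul_eq_zero.mp z2 with h | h
      · linarith
      · exfalso; linarith
    constructor
    · by_contra hne
      have hlt : a < a' := lt_of_le_of_ne haa' hne
      have h := fib_strict_aux ha hlt
      have : A < A' := by rw [hAdef, hA'def]; exact_mod_cast h
      linarith
    · by_contra hne
      have hlt : b < b' := lt_of_le_of_ne hbb' hne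
      have h := fib_strict_aux (le_trans ha hab) hlt
      have : B < B' := by rw [hBdef, hB'def]; exact_mod_cast h
      linarith
  · rintro ⟨rfl, rfl⟩; rfl
end

section
/- Let A, C ≥ 2 and t ≥ 1 be integers, and let a, b, c be integers with A ≤ a ≤ b, c = a + b + t and c ≥ C. Set L = 1 − (3/√5)·φ^(−t) + (1 − (3/√5)·φ^t)·(φ^(−2t−2A) + φ^(2A−2C)) − (6 + (3/√5)·φ^t + 9/√5)·φ^(−2C) and U = 1 − (3/√5)·φ^(−t) + (1 + (3/√5)·φ^t)·(φ^(−2t−2A) + φ^(2A−2C)) + 9·φ^(−2C). Then L·(1/5)·φ^(2c) ≤ m(a,b,c) ≤ U·(1/5)·φ^(2c). -/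
set_option maxHeartbeats 2000000

/-- Let `A, C ≥ 2` and `t ≥ 1` be integers, and let `a, b, c` be integers with
`A ≤ a ≤ b`, `c = a + b + t` and `c ≥ C`. With
`L = 1 − (3/√5)·φ^(−t) + (1 − (3/√5)·φ^t)·(φ^(−2t−2A) + φ^(2A−2C)) − (6 + (3/√5)·φ^t + 9/√5)·φ^(−2C)`
and
`U = 1 − (3/√5)·φ^(−t) + (1 + (3/√5)·φ^t)·(φ^(−2t−2A) + φ^(2A−2C)) + 9·φ^(−2C)`,
one has `L·(1/5)·φ^(2c) ≤ m(a,b,c) ≤ U·(1/5)·φ^(2c)`. -/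
theorem karamata_bound (A C t a b c : ℕ) (hA : 2 ≤ A) (hC : 2 ≤ C) (ht : 1 ≤ t)
    (hAa : A ≤ a) (hab : a ≤ b) (hc : c = a + b + t) (hcC : C ≤ c) :
    letI φ : ℝ := (1 + Real.sqrt 5) / 2
    letI L : ℝ := 1 - (3 / Real.sqrt 5) * φ ^ (-(t : ℤ)) +
      (1 - (3 / Real.sqrt 5) * φ ^ (t : ℤ)) *
        (φ ^ (-2 * (t : ℤ) - 2 * (A : ℤ)) + φ ^ (2 * (A : ℤ) - 2 * (C : ℤ))) -
      (6 + (3 / Real.sqrt 5) * φ ^ (t : ℤ) + 9 / Real.sqrt 5) * φ ^ (-2 * (C : ℤ))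
    letI U : ℝ := 1 - (3 / Real.sqrt 5) * φ ^ (-(t : ℤ)) +
      (1 + (3 / Real.sqrt 5) * φ ^ (t : ℤ)) *
        (φ ^ (-2 * (t : ℤ) - 2 * (A : ℤ)) + φ ^ (2 * (A : ℤ) - 2 * (C : ℤ))) +
      9 * φ ^ (-2 * (C : ℤ))
    L * (1 / 5) * φ ^ (2 * c) ≤ (mF a b c : ℝ) ∧
      (mF a b c : ℝ) ≤ U * (1 / 5) * φ ^ (2 * c) := by
  have hs5 : Real.sqrt 5 ^ 2 = 5 := Real.sq_sqrt (by norm_num)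
  have hs_pos : (0:ℝ) < Real.sqrt 5 := Real.sqrt_pos.mpr (by norm_num)
  have binet : ∀ n : ℕ, Real.sqrt 5 * (Nat.fib n : ℝ) =
      ((1 + Real.sqrt 5) / 2) ^ (n:ℤ) - (-1:ℝ)^n * ((1 + Real.sqrt 5) / 2) ^ (-(n:ℤ)) := by
    intro n
    have hs : Real.sqrt 5 ≠ 0 := ne_of_gt hs_pos
    have hψ : Real.goldenConj = -((1 + Real.sqrt 5) / 2)⁻¹ := by
      have h := Real.inv_goldenRatio
      rw [show Real.goldenRatio = (1 + Real.sqrt 5) / 2 from rfl] at h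
      rw [h]; ring
    rw [show ((Nat.fib n : ℝ)) = (Real.goldenRatio ^ n - Real.goldenConj ^ n)/Real.sqrt 5 from
      Real.coe_fib_eq n, hψ, show Real.goldenRatio = (1 + Real.sqrt 5)/2 from rfl,
      mul_div_cancel₀ _ hs, neg_pow, inv_pow, zpow_neg, zpow_natCast]
  set g : ℝ := (1 + Real.sqrt 5) / 2 with hgdef
  set s : ℝ := Real.sqrt 5 with hsdef
  have hs_lb : (11/5 : ℝ) ≤ s := by nlinarith
  have hs_ub : s ≤ 9/4 := by nlinarith
  have hs_ne : s ≠ 0 := ne_of_gt hs_pos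
  have hg_lb : (8/5 : ℝ) ≤ g := by rw [hgdef]; linarith
  have hg_pos : (0:ℝ) < g := by linarith
  have hg_ne : g ≠ 0 := ne_of_gt hg_pos
  have hg1 : (1:ℝ) ≤ g := by linarith
  -- integer casts of hypotheses
  have hc' : (c:ℤ) = (a:ℤ) + (b:ℤ) + (t:ℤ) := by exact_mod_cast hc
  have hAa' : (A:ℤ) ≤ (a:ℤ) := by exact_mod_cast hAa
  have hab' : (a:ℤ) ≤ (b:ℤ) := by exact_mod_cast hab
  have hA' : (2:ℤ) ≤ (A:ℤ) := by exact_mod_cast hA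
  have hC' : (2:ℤ) ≤ (C:ℤ) := by exact_mod_cast hC
  have ht' : (1:ℤ) ≤ (t:ℤ) := by exact_mod_cast ht
  have hcC' : (C:ℤ) ≤ (c:ℤ) := by exact_mod_cast hcC
  -- zpow toolkit
  have wpos : ∀ k : ℤ, (0:ℝ) < g ^ k := fun k => zpow_pos hg_pos k
  have wmono : ∀ {i j : ℤ}, i ≤ j → g ^ i ≤ g ^ j := fun {i j} h => zpow_le_zpow_right₀ hg1 h
  have wadd : ∀ i j : ℤ, g ^ (i + j) = g ^ i * g ^ j := fun i j => zpow_add₀ hg_ne i j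
  have wsplit : ∀ i j k : ℤ, i = j + k → g ^ i = g ^ j * g ^ k := by
    intro i j k h; rw [h, wadd]
  have winv : ∀ n : ℕ, g ^ (-(n:ℤ)) ≤ (5/8 : ℝ)^n := by
    intro n
    rw [zpow_neg, zpow_natCast, show (5/8 : ℝ)^n = ((8/5:ℝ)^n)⁻¹ by
      rw [← inv_pow]; norm_num]
    have h1 : (8/5:ℝ)^n ≤ g^n := pow_le_pow_left₀ (by norm_num) hg_lb n
    have h2 : (0:ℝ) < (8/5:ℝ)^n := by positivity
    exact inv_anti₀ h2 h1
  -- parity signs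
  have hea : ((-1:ℝ))^a = 1 ∨ ((-1:ℝ))^a = -1 := by
    rcases Nat.even_or_odd a with h | h
    · left; exact h.neg_one_pow
    · right; exact h.neg_one_pow
  have heb : ((-1:ℝ))^b = 1 ∨ ((-1:ℝ))^b = -1 := by
    rcases Nat.even_or_odd b with h | h
    · left; exact h.neg_one_pow
    · right; exact h.neg_one_pow
  have hec : ((-1:ℝ))^c = 1 ∨ ((-1:ℝ))^c = -1 := by
    rcases Nat.even_or_odd c with h | h
    · left; exact h.neg_one_pow
    · right; exact h.neg_one_pow
  have hprod : ∀ u v : ℝ, (u = 1 ∨ u = -1) → (v = 1 ∨ v = -1) → (u*v = 1 ∨ u*v = -1) := by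
    rintro u v (rfl|rfl) (rfl|rfl) <;> norm_num
  have sgn : ∀ (e v : ℝ), (e = 1 ∨ e = -1) → 0 ≤ v → -v ≤ e*v ∧ e*v ≤ v := by
    rintro e v (rfl|rfl) hv <;> constructor <;> nlinarith
  set ea : ℝ := ((-1:ℝ))^a with headef
  set eb : ℝ := ((-1:ℝ))^b with hebdef
  set ec : ℝ := ((-1:ℝ))^c with hecdef
  have hebc := hprod _ _ heb hec
  have heac := hprod _ _ hea hec
  have heab := hprod _ _ hea heb
  have heabc := hprod _ _ heab hec
  -- the three Binet values
  set x : ℝ := g ^ (a:ℤ) - ea * g ^ (-(a:ℤ)) with hxdef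
  set y : ℝ := g ^ (b:ℤ) - eb * g ^ (-(b:ℤ)) with hydef
  set z : ℝ := g ^ (c:ℤ) - ec * g ^ (-(c:ℤ)) with hzdef
  have hfa : s * (Nat.fib a : ℝ) = x := binet a
  have hfb : s * (Nat.fib b : ℝ) = y := binet b
  have hfc : s * (Nat.fib c : ℝ) = z := binet c
  -- squares
  have sq_expand : ∀ (n : ℕ) (e : ℝ), (e = 1 ∨ e = -1) →
      (g ^ (n:ℤ) - e * g ^ (-(n:ℤ)))^2 = g ^ (2*(n:ℤ)) + g ^ (-2*(n:ℤ)) - 2*e := by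
    intro n e he
    have e1 : g ^ (2*(n:ℤ)) = g ^ (n:ℤ) * g ^ (n:ℤ) := wsplit _ _ _ (by ring)
    have e2 : g ^ (-2*(n:ℤ)) = g ^ (-(n:ℤ)) * g ^ (-(n:ℤ)) := wsplit _ _ _ (by ring)
    have e3 : g ^ ((n:ℤ)) * g ^ (-(n:ℤ)) = 1 := by
      rw [← wadd]; simp
    have e4 : e^2 = 1 := by rcases he with rfl|rfl <;> norm_num
    rw [e1, e2]
    linear_combination (-2*e)*e3 + (g ^ (-(n:ℤ)))^2 * e4
  have hx2 : x^2 = g ^ (2*(a:ℤ)) + g ^ (-2*(a:ℤ)) - 2*ea := sq_expand a ea hea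
  have hy2 : y^2 = g ^ (2*(b:ℤ)) + g ^ (-2*(b:ℤ)) - 2*eb := sq_expand b eb heb
  have hz2 : z^2 = g ^ (2*(c:ℤ)) + g ^ (-2*(c:ℤ)) - 2*ec := sq_expand c ec hec
  -- triple product
  have q1 : g ^ (2*(c:ℤ)-(t:ℤ)) = g ^ (a:ℤ) * g ^ (b:ℤ) * g ^ (c:ℤ) := by
    rw [← wadd, ← wadd]; congr 1; omega
  have q2 : g ^ (-(t:ℤ)) = g ^ (a:ℤ) * g ^ (b:ℤ) * g ^ (-(c:ℤ)) := by
    rw [← wadd, ← wadd]; congr 1; omega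
  have q3 : g ^ (2*(a:ℤ)+(t:ℤ)) = g ^ (a:ℤ) * g ^ (-(b:ℤ)) * g ^ (c:ℤ) := by
    rw [← wadd, ← wadd]; congr 1; omega
  have q4 : g ^ (2*(b:ℤ)+(t:ℤ)) = g ^ (-(a:ℤ)) * g ^ (b:ℤ) * g ^ (c:ℤ) := by
    rw [← wadd, ← wadd]; congr 1; omega
  have q5 : g ^ (-2*(b:ℤ)-(t:ℤ)) = g ^ (a:ℤ) * g ^ (-(b:ℤ)) * g ^ (-(c:ℤ)) := by
    rw [← wadd, ← wadd]; congr 1; omega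
  have q6 : g ^ (-2*(a:ℤ)-(t:ℤ)) = g ^ (-(a:ℤ)) * g ^ (b:ℤ) * g ^ (-(c:ℤ)) := by
    rw [← wadd, ← wadd]; congr 1; omega
  have q7 : g ^ ((t:ℤ)) = g ^ (-(a:ℤ)) * g ^ (-(b:ℤ)) * g ^ (c:ℤ) := by
    rw [← wadd, ← wadd]; congr 1; omega
  have q8 : g ^ ((t:ℤ)-2*(c:ℤ)) = g ^ (-(a:ℤ)) * g ^ (-(b:ℤ)) * g ^ (-(c:ℤ)) := by
    rw [← wadd, ← wadd]; congr 1; omega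
  -- monotonicity facts
  have f1 : g ^ (2*(b:ℤ)) ≤ g ^ (2*(c:ℤ)-2*(t:ℤ)-2*(A:ℤ)) := wmono (by omega)
  have f2 : g ^ (2*(a:ℤ)) ≤ g ^ (2*(c:ℤ)-2*(t:ℤ)-2*(A:ℤ)) := wmono (by omega)
  have f3 : g ^ (2*(a:ℤ)) ≤ g ^ (2*(b:ℤ)) := wmono (by omega)
  have f4 : (1:ℝ) ≤ g ^ (2*(a:ℤ)) := by
    have := wmono (show (0:ℤ) ≤ 2*(a:ℤ) by omega); simpa using this
  have f5 : (1:ℝ) ≤ g ^ (2*(b:ℤ)) := by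
    have := wmono (show (0:ℤ) ≤ 2*(b:ℤ) by omega); simpa using this
  have f6 : (1:ℝ) ≤ g ^ (2*(c:ℤ)-2*(C:ℤ)) := by
    have := wmono (show (0:ℤ) ≤ 2*(c:ℤ)-2*(C:ℤ) by omega); simpa using this
  have fT : s ≤ 3 * g ^ ((t:ℤ)) := by
    have h1 : g ≤ g ^ ((t:ℤ)) := by
      have := wmono (show (1:ℤ) ≤ (t:ℤ) by omega); simpa using this
    linarith only [h1, hg_lb, hs_ub]
  have fTD : g ^ ((t:ℤ)) ≤ g ^ (2*(c:ℤ)-2*(C:ℤ)+(t:ℤ)) := wmono (by omega)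
  -- combined square bound
  have P : g ^ (2*(a:ℤ)) + g ^ (2*(b:ℤ)) ≤
      g ^ (2*(c:ℤ)-2*(t:ℤ)-2*(A:ℤ)) + g ^ (2*(c:ℤ)+2*(A:ℤ)-2*(C:ℤ)) := by
    rcases eq_or_lt_of_le hAa with h | h
    · have h' : (A:ℤ) = (a:ℤ) := by exact_mod_cast h
      have hX1 : g ^ (2*(c:ℤ)-2*(t:ℤ)-2*(A:ℤ)) = g ^ (2*(b:ℤ)) := by congr 1; omega
      have hu1X2 : g ^ (2*(a:ℤ)) ≤ g ^ (2*(c:ℤ)+2*(A:ℤ)-2*(C:ℤ)) := wmono (by omega)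
      linarith only [hX1, hu1X2]
    · have h' : (A:ℤ) + 1 ≤ (a:ℤ) := by exact_mod_cast h
      have e : g ^ (2*(c:ℤ)-2*(t:ℤ)-2*(A:ℤ)) = g ^ (2*(b:ℤ)) * g ^ (2*(a:ℤ)-2*(A:ℤ)) := by
        rw [← wadd]; congr 1; omega
      have h2 : g ^ ((2:ℤ)) ≤ g ^ (2*(a:ℤ)-2*(A:ℤ)) := wmono (by omega)
      have h3 : (2:ℝ) ≤ g ^ ((2:ℤ)) := by
        have e2 : g ^ ((2:ℤ)) = g * g := by
          rw [wsplit 2 1 1 (by norm_num)]; simp [zpow_one]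
        rw [e2]; nlinarith only [hg_lb]
      have h4 := mul_le_mul_of_nonneg_left (h3.trans h2) (wpos (2*(b:ℤ))).le
      have h5 := wpos (2*(c:ℤ)+2*(A:ℤ)-2*(C:ℤ))
      linarith only [e, f3, h4, h5]
  -- splitting relations
  have r1 : g ^ (2*(a:ℤ)+(t:ℤ)) = g ^ (2*(a:ℤ)) * g ^ ((t:ℤ)) := wsplit _ _ _ (by ring)
  have r2 : g ^ (2*(b:ℤ)+(t:ℤ)) = g ^ (2*(b:ℤ)) * g ^ ((t:ℤ)) := wsplit _ _ _ (by ring)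
  have r3 : g ^ (2*(c:ℤ)-(t:ℤ)-2*(A:ℤ)) = g ^ (2*(c:ℤ)-2*(t:ℤ)-2*(A:ℤ)) * g ^ ((t:ℤ)) :=
    wsplit _ _ _ (by ring)
  have r4 : g ^ (2*(c:ℤ)+2*(A:ℤ)-2*(C:ℤ)+(t:ℤ)) = g ^ (2*(c:ℤ)+2*(A:ℤ)-2*(C:ℤ)) * g ^ ((t:ℤ)) :=
    wsplit _ _ _ (by ring)
  -- numeric small bounds
  have n1 : g ^ (-(t:ℤ)) ≤ (5/8:ℝ) := by
    have := (wmono (show -(t:ℤ) ≤ -((1:ℕ):ℤ) by omega)).trans (winv 1)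
    simpa using this
  have n2 : g ^ (-2*(b:ℤ)-(t:ℤ)) ≤ (1/10:ℝ) := by
    have := (wmono (show -2*(b:ℤ)-(t:ℤ) ≤ -((5:ℕ):ℤ) by omega)).trans (winv 5)
    norm_num at this ⊢; linarith
  have n3 : g ^ (-2*(a:ℤ)-(t:ℤ)) ≤ (1/10:ℝ) := by
    have := (wmono (show -2*(a:ℤ)-(t:ℤ) ≤ -((5:ℕ):ℤ) by omega)).trans (winv 5)
    norm_num at this ⊢; linarith
  have n4 : g ^ ((t:ℤ)-2*(c:ℤ)) ≤ (1/10:ℝ) := by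
    have := (wmono (show (t:ℤ)-2*(c:ℤ) ≤ -((5:ℕ):ℤ) by omega)).trans (winv 5)
    norm_num at this ⊢; linarith
  have n5 : g ^ (-2*(a:ℤ)) ≤ (4/25:ℝ) := by
    have := (wmono (show -2*(a:ℤ) ≤ -((4:ℕ):ℤ) by omega)).trans (winv 4)
    norm_num at this ⊢; linarith
  have n6 : g ^ (-2*(b:ℤ)) ≤ (4/25:ℝ) := by
    have := (wmono (show -2*(b:ℤ) ≤ -((4:ℕ):ℤ) by omega)).trans (winv 4)
    norm_num at this ⊢; linarith
  have n7 : g ^ (-2*(c:ℤ)) ≤ (4/25:ℝ) := by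
    have := (wmono (show -2*(c:ℤ) ≤ -((4:ℕ):ℤ) by omega)).trans (winv 4)
    norm_num at this ⊢; linarith
  -- sign bounds for small terms
  have s1 := sgn ec (g ^ (-(t:ℤ))) hec (wpos _).le
  have s2 := sgn (eb*ec) (g ^ (-2*(b:ℤ)-(t:ℤ))) hebc (wpos _).le
  have s3 := sgn (ea*ec) (g ^ (-2*(a:ℤ)-(t:ℤ))) heac (wpos _).le
  have s4 := sgn (ea*eb*ec) (g ^ ((t:ℤ)-2*(c:ℤ))) heabc (wpos _).le
  have s5 := sgn (ea*eb) (g ^ ((t:ℤ))) heab (wpos _).le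
  have bea : -1 ≤ ea ∧ ea ≤ 1 := by rcases hea with h|h <;> rw [h] <;> norm_num
  have beb : -1 ≤ eb ∧ eb ≤ 1 := by rcases heb with h|h <;> rw [h] <;> norm_num
  have bec : -1 ≤ ec ∧ ec ≤ 1 := by rcases hec with h|h <;> rw [h] <;> norm_num
  -- lower-bound slot claim
  have B12 : s * g ^ (2*(c:ℤ)-2*(t:ℤ)-2*(A:ℤ)) - 3 * g ^ (2*(c:ℤ)-(t:ℤ)-2*(A:ℤ))
      + s * g ^ (2*(c:ℤ)+2*(A:ℤ)-2*(C:ℤ)) - 3 * g ^ (2*(c:ℤ)+2*(A:ℤ)-2*(C:ℤ)+(t:ℤ))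
      ≤ s * g ^ (2*(b:ℤ)) + 3 * ea * g ^ (2*(b:ℤ)+(t:ℤ))
      + s * g ^ (2*(a:ℤ)) + 3 * eb * g ^ (2*(a:ℤ)+(t:ℤ)) := by
    rw [r1, r2, r3, r4]
    have hT := wpos ((t:ℤ))
    have hX1 := wpos (2*(c:ℤ)-2*(t:ℤ)-2*(A:ℤ))
    have hX2 := wpos (2*(c:ℤ)+2*(A:ℤ)-2*(C:ℤ))
    have hu1 := wpos (2*(a:ℤ))
    have hu2 := wpos (2*(b:ℤ))
    rcases hea with h|h <;> rcases heb with h'|h' <;> rw [h, h']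
    · linarith only [mul_nonneg (by linarith only [fT] : (0:ℝ) ≤ 3*g ^ ((t:ℤ)) - s)
        (by positivity : (0:ℝ) ≤ g ^ (2*(c:ℤ)-2*(t:ℤ)-2*(A:ℤ)) + g ^ (2*(c:ℤ)+2*(A:ℤ)-2*(C:ℤ))),
        mul_pos hs_pos hu1, mul_pos hs_pos hu2, mul_pos hu1 hT, mul_pos hu2 hT]
    · linarith only [mul_nonneg (by linarith only [fT] : (0:ℝ) ≤ 3*g ^ ((t:ℤ)) - s)
        (by linarith only [f2] : (0:ℝ) ≤ g ^ (2*(c:ℤ)-2*(t:ℤ)-2*(A:ℤ)) - g ^ (2*(a:ℤ))),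
        mul_nonneg (by linarith : (0:ℝ) ≤ 3*g ^ ((t:ℤ)) - s) hX2.le,
        mul_pos hs_pos hu2, mul_pos hu2 hT]
    · linarith only [mul_nonneg (by linarith only [fT] : (0:ℝ) ≤ 3*g ^ ((t:ℤ)) - s)
        (by linarith only [f1] : (0:ℝ) ≤ g ^ (2*(c:ℤ)-2*(t:ℤ)-2*(A:ℤ)) - g ^ (2*(b:ℤ))),
        mul_nonneg (by linarith : (0:ℝ) ≤ 3*g ^ ((t:ℤ)) - s) hX2.le,
        mul_pos hs_pos hu1, mul_pos hu1 hT]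
    · linarith only [mul_nonneg (by linarith only [fT] : (0:ℝ) ≤ 3*g ^ ((t:ℤ)) - s)
        (by linarith only [P] : (0:ℝ) ≤ g ^ (2*(c:ℤ)-2*(t:ℤ)-2*(A:ℤ)) + g ^ (2*(c:ℤ)+2*(A:ℤ)-2*(C:ℤ))
          - g ^ (2*(a:ℤ)) - g ^ (2*(b:ℤ)))]
  -- upper-bound slot claim
  have Cc : 3 * ea * g ^ (2*(b:ℤ)+(t:ℤ)) + 3 * eb * g ^ (2*(a:ℤ)+(t:ℤ)) - 3*(ea*eb) * g ^ ((t:ℤ))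
      ≤ 3 * g ^ (2*(c:ℤ)-(t:ℤ)-2*(A:ℤ)) + 3 * g ^ (2*(c:ℤ)+2*(A:ℤ)-2*(C:ℤ)+(t:ℤ)) := by
    rw [r1, r2, r3, r4]
    have hT := wpos ((t:ℤ))
    have hX1 := wpos (2*(c:ℤ)-2*(t:ℤ)-2*(A:ℤ))
    have hX2 := wpos (2*(c:ℤ)+2*(A:ℤ)-2*(C:ℤ))
    have hu1 := wpos (2*(a:ℤ))
    have hu2 := wpos (2*(b:ℤ))
    rcases hea with h|h <;> rcases heb with h'|h' <;> rw [h, h']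
    · linarith only [hT, mul_nonneg hT.le (by linarith only [P] : (0:ℝ) ≤
        g ^ (2*(c:ℤ)-2*(t:ℤ)-2*(A:ℤ)) + g ^ (2*(c:ℤ)+2*(A:ℤ)-2*(C:ℤ))
          - g ^ (2*(a:ℤ)) - g ^ (2*(b:ℤ)))]
    · linarith only [mul_nonneg hT.le (by linarith only [f1] : (0:ℝ) ≤
          g ^ (2*(c:ℤ)-2*(t:ℤ)-2*(A:ℤ)) - g ^ (2*(b:ℤ))),
        mul_nonneg hT.le (by linarith only [f4] : (0:ℝ) ≤ g ^ (2*(a:ℤ)) - 1),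
        mul_nonneg hT.le hX2.le]
    · linarith only [mul_nonneg hT.le (by linarith only [f2] : (0:ℝ) ≤
          g ^ (2*(c:ℤ)-2*(t:ℤ)-2*(A:ℤ)) - g ^ (2*(a:ℤ))),
        mul_nonneg hT.le (by linarith only [f5] : (0:ℝ) ≤ g ^ (2*(b:ℤ)) - 1),
        mul_nonneg hT.le hX2.le]
    · linarith only [mul_nonneg hT.le hX1.le, mul_nonneg hT.le hX2.le,
        mul_nonneg hT.le hu1.le, mul_nonneg hT.le hu2.le, hT]
  -- auxiliary nonnegativity products
  have pos1 : (0:ℝ) ≤ s * g ^ (-2*(a:ℤ)) := by positivity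
  have pos2 : (0:ℝ) ≤ s * g ^ (-2*(b:ℤ)) := by positivity
  have pos3 : (0:ℝ) ≤ s * g ^ (-2*(c:ℤ)) := by positivity
  have P1 : (0:ℝ) ≤ 2*s*(3 - (ea+eb+ec)) :=
    mul_nonneg (by linarith only [hs_pos]) (by linarith only [bea.2, beb.2, bec.2])
  have P1' : (0:ℝ) ≤ 2*s*(3 + (ea+eb+ec)) :=
    mul_nonneg (by linarith only [hs_pos]) (by linarith only [bea.1, beb.1, bec.1])
  have P2 : (0:ℝ) ≤ 6*s*(g ^ (2*(c:ℤ)-2*(C:ℤ)) - 1) :=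
    mul_nonneg (by linarith only [hs_pos]) (by linarith only [f6])
  have P2' : (0:ℝ) ≤ 9*s*(g ^ (2*(c:ℤ)-2*(C:ℤ)) - 1) :=
    mul_nonneg (by linarith only [hs_pos]) (by linarith only [f6])
  have Psq := mul_le_mul_of_nonneg_left P hs_pos.le
  have nD : (1:ℝ) ≤ g ^ (2*(c:ℤ)-2*(C:ℤ)) := f6
  -- bounds with s on the negative-power squares (for the upper bound)
  have u5 : s * g ^ (-2*(a:ℤ)) ≤ s * (4/25) := mul_le_mul_of_nonneg_left n5 hs_pos.le
  have u6 : s * g ^ (-2*(b:ℤ)) ≤ s * (4/25) := mul_le_mul_of_nonneg_left n6 hs_pos.le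
  have u7 : s * g ^ (-2*(c:ℤ)) ≤ s * (4/25) := mul_le_mul_of_nonneg_left n7 hs_pos.le
  have hxyz : x*y*z =
      g ^ (2*(c:ℤ)-(t:ℤ)) - ec * g ^ (-(t:ℤ)) - eb * g ^ (2*(a:ℤ)+(t:ℤ))
      - ea * g ^ (2*(b:ℤ)+(t:ℤ)) + eb*ec * g ^ (-2*(b:ℤ)-(t:ℤ))
      + ea*ec * g ^ (-2*(a:ℤ)-(t:ℤ)) + ea*eb * g ^ ((t:ℤ))
      - ea*eb*ec * g ^ ((t:ℤ)-2*(c:ℤ)) := by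
    rw [hxdef, hydef, hzdef, q1, q2, q3, q4, q5, q6, q7, q8]; ring
  -- the master identity
  have hm5 : 5*s*((mF a b c : ℝ)) = s*x^2 + s*y^2 + s*z^2 - 3*(x*y*z) := by
    rw [← hfa, ← hfb, ← hfc]
    unfold mF
    push_cast
    linear_combination (-s*((Nat.fib a:ℝ)^2+(Nat.fib b:ℝ)^2+(Nat.fib c:ℝ)^2
      - 3*(Nat.fib a:ℝ)*(Nat.fib b:ℝ)*(Nat.fib c:ℝ))) * hs5
  rw [hx2, hy2, hz2, hxyz] at hm5
  -- exponent conversion for the goal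
  have hE : g ^ (2*c) = g ^ (2*(c:ℤ)) := by
    rw [show (2*(c:ℤ)) = ((2*c : ℕ) : ℤ) by push_cast; ring, zpow_natCast]
  have h5s : (0:ℝ) < 5*s := by linarith
  constructor
  · -- lower bound
    have key1 : s * (1 - 3 / s * g ^ (-(t : ℤ)) +
        (1 - 3 / s * g ^ (t : ℤ)) *
          (g ^ (-2 * (t : ℤ) - 2 * (A : ℤ)) + g ^ (2 * (A : ℤ) - 2 * (C : ℤ))) -
        (6 + 3 / s * g ^ (t : ℤ) + 9 / s) * g ^ (-2 * (C : ℤ))) * g ^ (2*(c:ℤ)) =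
        s * g ^ (2*(c:ℤ)) - 3 * g ^ (2*(c:ℤ)-(t:ℤ))
        + s * g ^ (2*(c:ℤ)-2*(t:ℤ)-2*(A:ℤ)) - 3 * g ^ (2*(c:ℤ)-(t:ℤ)-2*(A:ℤ))
        + s * g ^ (2*(c:ℤ)+2*(A:ℤ)-2*(C:ℤ)) - 3 * g ^ (2*(c:ℤ)+2*(A:ℤ)-2*(C:ℤ)+(t:ℤ))
        - 6*s * g ^ (2*(c:ℤ)-2*(C:ℤ)) - 3 * g ^ (2*(c:ℤ)-2*(C:ℤ)+(t:ℤ))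
        - 9 * g ^ (2*(c:ℤ)-2*(C:ℤ)) := by
      rw [wsplit (2*(c:ℤ)-(t:ℤ)) (-(t:ℤ)) (2*(c:ℤ)) (by ring),
        wsplit (2*(c:ℤ)-2*(t:ℤ)-2*(A:ℤ)) (-2*(t:ℤ)-2*(A:ℤ)) (2*(c:ℤ)) (by ring),
        show g ^ (2*(c:ℤ)-(t:ℤ)-2*(A:ℤ)) = g ^ ((t:ℤ)) * (g ^ (-2*(t:ℤ)-2*(A:ℤ)) * g ^ (2*(c:ℤ)))
          by rw [← wadd, ← wadd]; congr 1; ring,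
        wsplit (2*(c:ℤ)+2*(A:ℤ)-2*(C:ℤ)) (2*(A:ℤ)-2*(C:ℤ)) (2*(c:ℤ)) (by ring),
        show g ^ (2*(c:ℤ)+2*(A:ℤ)-2*(C:ℤ)+(t:ℤ)) =
            g ^ ((t:ℤ)) * (g ^ (2*(A:ℤ)-2*(C:ℤ)) * g ^ (2*(c:ℤ)))
          by rw [← wadd, ← wadd]; congr 1; ring,
        wsplit (2*(c:ℤ)-2*(C:ℤ)) (-2*(C:ℤ)) (2*(c:ℤ)) (by ring),
        show g ^ (2*(c:ℤ)-2*(C:ℤ)+(t:ℤ)) = g ^ ((t:ℤ)) * (g ^ (-2*(C:ℤ)) * g ^ (2*(c:ℤ)))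
          by rw [← wadd, ← wadd]; congr 1; ring]
      field_simp
      ring
    have low : s * g ^ (2*(c:ℤ)) - 3 * g ^ (2*(c:ℤ)-(t:ℤ))
        + s * g ^ (2*(c:ℤ)-2*(t:ℤ)-2*(A:ℤ)) - 3 * g ^ (2*(c:ℤ)-(t:ℤ)-2*(A:ℤ))
        + s * g ^ (2*(c:ℤ)+2*(A:ℤ)-2*(C:ℤ)) - 3 * g ^ (2*(c:ℤ)+2*(A:ℤ)-2*(C:ℤ)+(t:ℤ))
        - 6*s * g ^ (2*(c:ℤ)-2*(C:ℤ)) - 3 * g ^ (2*(c:ℤ)-2*(C:ℤ)+(t:ℤ))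
        - 9 * g ^ (2*(c:ℤ)-2*(C:ℤ)) ≤ 5*s*((mF a b c : ℝ)) := by
      have sB5 : -9 * g ^ (2*(c:ℤ)-2*(C:ℤ)) ≤
          3*(ec * g ^ (-(t:ℤ))) - 3*((eb*ec) * g ^ (-2*(b:ℤ)-(t:ℤ)))
          - 3*((ea*ec) * g ^ (-2*(a:ℤ)-(t:ℤ))) + 3*((ea*eb*ec) * g ^ ((t:ℤ)-2*(c:ℤ))) := by
        have w1 := wpos (-(t:ℤ))
        have w2 := wpos (-2*(b:ℤ)-(t:ℤ))
        have w3 := wpos (-2*(a:ℤ)-(t:ℤ))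
        have w4 := wpos ((t:ℤ)-2*(c:ℤ))
        linarith only [s1.1, s2.2, s3.2, s4.1, n1, n2, n3, n4, nD, w1, w2, w3, w4]
      have sB6 : -3 * g ^ (2*(c:ℤ)-2*(C:ℤ)+(t:ℤ)) ≤ -3*((ea*eb) * g ^ ((t:ℤ))) := by
        linarith only [s5.2, fTD]
      linarith only [hm5, B12, sB5, sB6, pos1, pos2, pos3, P1, P2]
    calc (1 - 3 / s * g ^ (-(t : ℤ)) +
        (1 - 3 / s * g ^ (t : ℤ)) *
          (g ^ (-2 * (t : ℤ) - 2 * (A : ℤ)) + g ^ (2 * (A : ℤ) - 2 * (C : ℤ))) -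
        (6 + 3 / s * g ^ (t : ℤ) + 9 / s) * g ^ (-2 * (C : ℤ))) * (1/5) * g ^ (2*c)
        = (s * (1 - 3 / s * g ^ (-(t : ℤ)) +
          (1 - 3 / s * g ^ (t : ℤ)) *
            (g ^ (-2 * (t : ℤ) - 2 * (A : ℤ)) + g ^ (2 * (A : ℤ) - 2 * (C : ℤ))) -
          (6 + 3 / s * g ^ (t : ℤ) + 9 / s) * g ^ (-2 * (C : ℤ))) * g ^ (2*(c:ℤ))) * (5*s)⁻¹ := by
          rw [hE]; field_simp
      _ ≤ (5*s*((mF a b c : ℝ))) * (5*s)⁻¹ := by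
          apply mul_le_mul_of_nonneg_right _ (by positivity)
          rw [key1]; exact low
      _ = (mF a b c : ℝ) := by field_simp
  · -- upper bound
    have key2 : s * (1 - 3 / s * g ^ (-(t : ℤ)) +
        (1 + 3 / s * g ^ (t : ℤ)) *
          (g ^ (-2 * (t : ℤ) - 2 * (A : ℤ)) + g ^ (2 * (A : ℤ) - 2 * (C : ℤ))) +
        9 * g ^ (-2 * (C : ℤ))) * g ^ (2*(c:ℤ)) =
        s * g ^ (2*(c:ℤ)) - 3 * g ^ (2*(c:ℤ)-(t:ℤ))
        + s * g ^ (2*(c:ℤ)-2*(t:ℤ)-2*(A:ℤ)) + 3 * g ^ (2*(c:ℤ)-(t:ℤ)-2*(A:ℤ))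
        + s * g ^ (2*(c:ℤ)+2*(A:ℤ)-2*(C:ℤ)) + 3 * g ^ (2*(c:ℤ)+2*(A:ℤ)-2*(C:ℤ)+(t:ℤ))
        + 9*s * g ^ (2*(c:ℤ)-2*(C:ℤ)) := by
      rw [wsplit (2*(c:ℤ)-(t:ℤ)) (-(t:ℤ)) (2*(c:ℤ)) (by ring),
        wsplit (2*(c:ℤ)-2*(t:ℤ)-2*(A:ℤ)) (-2*(t:ℤ)-2*(A:ℤ)) (2*(c:ℤ)) (by ring),
        show g ^ (2*(c:ℤ)-(t:ℤ)-2*(A:ℤ)) = g ^ ((t:ℤ)) * (g ^ (-2*(t:ℤ)-2*(A:ℤ)) * g ^ (2*(c:ℤ)))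
          by rw [← wadd, ← wadd]; congr 1; ring,
        wsplit (2*(c:ℤ)+2*(A:ℤ)-2*(C:ℤ)) (2*(A:ℤ)-2*(C:ℤ)) (2*(c:ℤ)) (by ring),
        show g ^ (2*(c:ℤ)+2*(A:ℤ)-2*(C:ℤ)+(t:ℤ)) =
            g ^ ((t:ℤ)) * (g ^ (2*(A:ℤ)-2*(C:ℤ)) * g ^ (2*(c:ℤ)))
          by rw [← wadd, ← wadd]; congr 1; ring,
        wsplit (2*(c:ℤ)-2*(C:ℤ)) (-2*(C:ℤ)) (2*(c:ℤ)) (by ring)]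
      field_simp
      ring
    have upp : 5*s*((mF a b c : ℝ)) ≤
        s * g ^ (2*(c:ℤ)) - 3 * g ^ (2*(c:ℤ)-(t:ℤ))
        + s * g ^ (2*(c:ℤ)-2*(t:ℤ)-2*(A:ℤ)) + 3 * g ^ (2*(c:ℤ)-(t:ℤ)-2*(A:ℤ))
        + s * g ^ (2*(c:ℤ)+2*(A:ℤ)-2*(C:ℤ)) + 3 * g ^ (2*(c:ℤ)+2*(A:ℤ)-2*(C:ℤ)+(t:ℤ))
        + 9*s * g ^ (2*(c:ℤ)-2*(C:ℤ)) := by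
      have sC : 3*(ec * g ^ (-(t:ℤ))) - 3*((eb*ec) * g ^ (-2*(b:ℤ)-(t:ℤ)))
          - 3*((ea*ec) * g ^ (-2*(a:ℤ)-(t:ℤ))) + 3*((ea*eb*ec) * g ^ ((t:ℤ)-2*(c:ℤ)))
          ≤ 3*(5/8) + 3*(1/10) + 3*(1/10) + 3*(1/10) := by
        have w1 := wpos (-(t:ℤ))
        have w2 := wpos (-2*(b:ℤ)-(t:ℤ))
        have w3 := wpos (-2*(a:ℤ)-(t:ℤ))
        have w4 := wpos ((t:ℤ)-2*(c:ℤ))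
        linarith only [s1.2, s2.1, s3.1, s4.2, n1, n2, n3, n4, w1, w2, w3, w4]
      linarith only [hm5, Psq, Cc, sC, u5, u6, u7, P1', P2', hs_lb]
    calc (mF a b c : ℝ) = (5*s*((mF a b c : ℝ))) * (5*s)⁻¹ := by field_simp
      _ ≤ (s * (1 - 3 / s * g ^ (-(t : ℤ)) +
          (1 + 3 / s * g ^ (t : ℤ)) *
            (g ^ (-2 * (t : ℤ) - 2 * (A : ℤ)) + g ^ (2 * (A : ℤ) - 2 * (C : ℤ))) +
          9 * g ^ (-2 * (C : ℤ))) * g ^ (2*(c:ℤ))) * (5*s)⁻¹ := by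
          apply mul_le_mul_of_nonneg_right _ (by positivity)
          rw [key2]; exact upp
      _ = (1 - 3 / s * g ^ (-(t : ℤ)) +
          (1 + 3 / s * g ^ (t : ℤ)) *
            (g ^ (-2 * (t : ℤ) - 2 * (A : ℤ)) + g ^ (2 * (A : ℤ) - 2 * (C : ℤ))) +
          9 * g ^ (-2 * (C : ℤ))) * (1/5) * g ^ (2*c) := by
          rw [hE]; field_simp
end

section
/- Let m > 0 and let (F(a), F(b), F(c)) and (F(a'), F(b'), F(c')) be two ordered minimal Markoff-Fibonacci m-triples (so 2 ≤ a ≤ b ≤ c, 2 ≤ a' ≤ b' ≤ c', F(c) ≥ 3F(a)F(b), F(c') ≥ 3F(a')F(b'), and m(a,b,c) = m(a',b',c') = m) with c ≥ c'. If a ≥ 4 and c ≥ 9, then c' = c or c' = c − 1. -/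
lemma fib_catalan (n : ℕ) :
    ((Nat.fib n : ℤ)) * Nat.fib (n + 2) = (Nat.fib (n + 1) : ℤ) ^ 2 + (-1) ^ (n + 1) := by
  induction n with
  | zero => simp
  | succ k ih =>
    have h1 : (Nat.fib (k + 2) : ℤ) = Nat.fib k + Nat.fib (k + 1) := by
      exact_mod_cast congrArg (Nat.cast (R := ℤ)) (Nat.fib_add_two (n := k))
    have h2 : (Nat.fib (k + 3) : ℤ) = Nat.fib (k + 1) + Nat.fib (k + 2) := by
      exact_mod_cast congrArg (Nat.cast (R := ℤ)) (Nat.fib_add_two (n := k + 1))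
    show (Nat.fib (k+1) : ℤ) * Nat.fib (k + 3) = (Nat.fib (k + 2) : ℤ) ^ 2 + (-1) ^ (k + 2)
    rw [pow_succ (-1 : ℤ) (k+1)]
    linear_combination (Nat.fib (k+1) : ℤ) * h2 - ih - (Nat.fib (k+2) : ℤ) * h1

lemma fib_sq_le (d : ℕ) :
    (Nat.fib (d + 2) : ℤ) ^ 2 ≤ (Nat.fib d : ℤ) * Nat.fib (d + 4) + 1 := by
  have hc := fib_catalan d
  have e2 : (Nat.fib (d + 2) : ℤ) = Nat.fib d + Nat.fib (d + 1) := by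
    exact_mod_cast congrArg (Nat.cast (R := ℤ)) (Nat.fib_add_two (n := d))
  have e3 : (Nat.fib (d + 3) : ℤ) = Nat.fib (d + 1) + Nat.fib (d + 2) := by
    exact_mod_cast congrArg (Nat.cast (R := ℤ)) (Nat.fib_add_two (n := d + 1))
  have e4 : (Nat.fib (d + 4) : ℤ) = Nat.fib (d + 2) + Nat.fib (d + 3) := by
    exact_mod_cast congrArg (Nat.cast (R := ℤ)) (Nat.fib_add_two (n := d + 2))
  have hpm : (-1 : ℤ) ^ (d + 1) = 1 ∨ (-1 : ℤ) ^ (d + 1) = -1 := neg_one_pow_eq_or ℤ (d + 1)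
  rcases hpm with h | h <;> rw [h] at hc <;> nlinarith [hc, e2, e3, e4]

lemma fib32 : ∀ n : ℕ, 3 * Nat.fib (n + 2) ≤ 2 * Nat.fib (n + 3) := by
  have H : ∀ n : ℕ, 3 * Nat.fib (n + 2) ≤ 2 * Nat.fib (n + 3) ∧
      3 * Nat.fib (n + 3) ≤ 2 * Nat.fib (n + 4) := by
    intro n
    induction n with
    | zero => decide
    | succ k ih =>
      obtain ⟨h1, h2⟩ := ih
      refine ⟨h2, ?_⟩
      show 3 * Nat.fib (k + 4) ≤ 2 * Nat.fib (k + 5)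
      have e1 : Nat.fib (k + 5) = Nat.fib (k + 3) + Nat.fib (k + 4) := Nat.fib_add_two
      have e2 : Nat.fib (k + 4) = Nat.fib (k + 2) + Nat.fib (k + 3) := Nat.fib_add_two
      omega
  exact fun n => (H n).1

lemma keyAB (p q : ℕ) :
    Nat.fib (2*p+q+8) < 3 * Nat.fib (p+4) * Nat.fib (p+q+4) ∧
    3 * Nat.fib (p+4) * Nat.fib (p+q+4) ≤ Nat.fib (2*p+q+8) + Nat.fib (2*p+q+6) := by
  have h1 : Nat.fib (2*p+q+8) =
      Nat.fib (p+3) * Nat.fib (p+q+4) + Nat.fib (p+4) * Nat.fib (p+q+5) := by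
    rw [show 2*p+q+8 = (p+3) + (p+q+4) + 1 by ring]
    exact Nat.fib_add _ _
  have h2 : Nat.fib (2*p+q+6) =
      Nat.fib (p+3) * Nat.fib (p+q+2) + Nat.fib (p+4) * Nat.fib (p+q+3) := by
    rw [show 2*p+q+6 = (p+3) + (p+q+2) + 1 by ring]
    exact Nat.fib_add _ _
  have e1 : Nat.fib (p+4) = Nat.fib (p+2) + Nat.fib (p+3) := Nat.fib_add_two
  have e2 : Nat.fib (p+q+4) = Nat.fib (p+q+2) + Nat.fib (p+q+3) := Nat.fib_add_two
  have e3 : Nat.fib (p+q+5) = Nat.fib (p+q+3) + Nat.fib (p+q+4) := Nat.fib_add_two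
  have t1 : 3 * Nat.fib (p+2) ≤ 2 * Nat.fib (p+3) := fib32 p
  have t2 : 3 * Nat.fib (p+q+2) ≤ 2 * Nat.fib (p+q+3) := fib32 (p+q)
  have hu : 0 < Nat.fib (p+2) := Nat.fib_pos.mpr (by omega)
  have hw : 0 < Nat.fib (p+q+2) := Nat.fib_pos.mpr (by omega)
  have hmul := Nat.mul_le_mul t1 t2
  constructor
  · rw [h1, e3, e2, e1]; nlinarith [hu, hw, Nat.fib_pos.mpr (show 0 < p+3 by omega)]
  · rw [h1, h2, e3, e2, e1]; nlinarith [hmul]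

/-- Two ordered minimal Markoff-Fibonacci `m`-triples with `c ≥ c'`, `a ≥ 4`, `c ≥ 9`:
then `c' = c` or `c' = c − 1`. -/
theorem close_top_indices_a_ge_four (m : ℤ) (a b c a' b' c' : ℕ) (hm : 0 < m)
    (ha : 2 ≤ a) (hab : a ≤ b) (hbc : b ≤ c)
    (ha' : 2 ≤ a') (hab' : a' ≤ b') (hbc' : b' ≤ c')
    (hmin : 3 * Nat.fib a * Nat.fib b ≤ Nat.fib c)
    (hmin' : 3 * Nat.fib a' * Nat.fib b' ≤ Nat.fib c')
    (heq : mF a b c = m) (heq' : mF a' b' c' = m)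
    (hcc' : c' ≤ c) (ha4 : 4 ≤ a) (hc9 : 9 ≤ c) :
    c' = c ∨ c' = c - 1 := by
  by_cases hsplit : c - 1 ≤ c'
  · omega
  · exfalso
    have hc2 : c' ≤ c - 2 := by omega
    -- upper bound on m from the primed triple
    have hX : (1 : ℤ) ≤ Nat.fib a' := by
      exact_mod_cast Nat.fib_pos.mpr (by omega : 0 < a')
    have hXY : (Nat.fib a' : ℤ) ≤ Nat.fib b' := by exact_mod_cast Nat.fib_mono hab'
    have hZ : 3 * (Nat.fib a' : ℤ) * (Nat.fib b' : ℤ) ≤ (Nat.fib c' : ℤ) := by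
      exact_mod_cast hmin'
    have hup : m < (Nat.fib c' : ℤ) ^ 2 := by
      rw [← heq']; unfold mF
      set X := (Nat.fib a' : ℤ)
      set Y := (Nat.fib b' : ℤ)
      set Z := (Nat.fib c' : ℤ)
      clear_value X Y Z
      clear heq heq' hmin hmin'
      have hY : (1 : ℤ) ≤ Y := le_trans hX hXY
      have hxy1 : (1 : ℤ) ≤ X * Y := by
        have := mul_le_mul hX hY (by norm_num) (by linarith)
        linarith [this]
      have hXle : X ≤ X * Y := by nlinarith [hX, hY]
      have hYle : Y ≤ X * Y := by nlinarith [hX, hY]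
      have s1 : X ^ 2 ≤ (X * Y) ^ 2 := pow_le_pow_left₀ (by linarith) hXle 2
      have s2 : Y ^ 2 ≤ (X * Y) ^ 2 := pow_le_pow_left₀ (by linarith) hYle 2
      have s4 : (1 : ℤ) ≤ (X * Y) ^ 2 := by
        have := pow_le_pow_left₀ (by norm_num : (0:ℤ) ≤ 1) hxy1 2
        simpa using this
      have s3 : 9 * (X * Y) ^ 2 ≤ 3 * X * Y * Z := by
        have h0 : (0 : ℤ) ≤ 3 * X * Y := by linarith
        have h5 := mul_le_mul_of_nonneg_left hZ h0
        linarith [h5]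
      linarith [s1, s2, s3, s4]
    -- lower bound on m from the unprimed triple
    obtain ⟨p, rfl⟩ : ∃ p, a = p + 4 := ⟨a - 4, by omega⟩
    obtain ⟨q, rfl⟩ : ∃ q, b = p + q + 4 := ⟨b - (p + 4), by omega⟩
    obtain ⟨A, B⟩ := keyAB p q
    have hclt : 2 * p + q + 8 < c := by
      by_contra h
      push_neg at h
      exact absurd (le_trans hmin (Nat.fib_mono h)) A.not_ge
    obtain ⟨k, rfl⟩ : ∃ k, c = k + 9 := ⟨c - 9, by omega⟩
    have hL : 3 * Nat.fib (p+4) * Nat.fib (p+q+4) ≤ Nat.fib (k+8) + Nat.fib (k+6) :=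
      le_trans B (Nat.add_le_add (Nat.fib_mono (by omega)) (Nat.fib_mono (by omega)))
    have hLz : 3 * (Nat.fib (p+4) : ℤ) * (Nat.fib (p+q+4) : ℤ) ≤
        (Nat.fib (k+8) : ℤ) + (Nat.fib (k+6) : ℤ) := by exact_mod_cast hL
    have r1 : (Nat.fib (k+9) : ℤ) = Nat.fib (k+7) + Nat.fib (k+8) := by
      exact_mod_cast congrArg (Nat.cast (R := ℤ)) (Nat.fib_add_two (n := k + 7))
    have r2 : (Nat.fib (k+7) : ℤ) = Nat.fib (k+5) + Nat.fib (k+6) := by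
      exact_mod_cast congrArg (Nat.cast (R := ℤ)) (Nat.fib_add_two (n := k + 5))
    have hcat : (Nat.fib (k+7) : ℤ) ^ 2 ≤ (Nat.fib (k+5) : ℤ) * Nat.fib (k+9) + 1 :=
      fib_sq_le (k + 5)
    have h43 : Nat.fib 4 = 3 := by decide
    have hA3 : (3 : ℤ) ≤ Nat.fib (p+4) := by
      have := Nat.fib_mono (show 4 ≤ p + 4 by omega)
      rw [h43] at this; exact_mod_cast this
    have hB3 : (3 : ℤ) ≤ Nat.fib (p+q+4) := by
      have := Nat.fib_mono (show 4 ≤ p + q + 4 by omega)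
      rw [h43] at this; exact_mod_cast this
    have hZ0 : (0 : ℤ) ≤ Nat.fib (k+9) := Int.natCast_nonneg _
    have hlow : (Nat.fib (k+7) : ℤ) ^ 2 < m := by
      rw [← heq]; unfold mF
      set A := (Nat.fib (p+4) : ℤ)
      set B := (Nat.fib (p+q+4) : ℤ)
      set Z := (Nat.fib (k+9) : ℤ)
      set F5 := (Nat.fib (k+5) : ℤ)
      set F6 := (Nat.fib (k+6) : ℤ)
      set F7 := (Nat.fib (k+7) : ℤ)
      set F8 := (Nat.fib (k+8) : ℤ)
      clear_value A B Z F5 F6 F7 F8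
      clear heq heq' hmin hmin'
      have t1 : 3 * A * B * Z ≤ (F8 + F6) * Z := by
        have := mul_le_mul_of_nonneg_right hLz hZ0
        linarith [this]
      have e : F8 + F6 = Z - F5 := by linarith [r1, r2]
      have e2 : (Z - F5) * Z = Z ^ 2 - F5 * Z := by ring
      have hA2 : (9 : ℤ) ≤ A ^ 2 := by
        have h := mul_le_mul hA3 hA3 (by norm_num) (by linarith)
        linarith [h]
      have hB2 : (9 : ℤ) ≤ B ^ 2 := by
        have h := mul_le_mul hB3 hB3 (by norm_num) (by linarith)
        linarith [h]
      rw [e] at t1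
      linarith [t1, e2, hA2, hB2, hcat]
    have hmono : (Nat.fib c' : ℤ) ≤ Nat.fib (k+7) := by
      exact_mod_cast Nat.fib_mono (show c' ≤ k + 7 by omega)
    have hsq : (Nat.fib c' : ℤ) ^ 2 ≤ (Nat.fib (k+7) : ℤ) ^ 2 :=
      pow_le_pow_left₀ (Int.natCast_nonneg _) hmono 2
    linarith
end

section
/- Let m > 0 and let (F(a), F(b), F(c)) and (F(a'), F(b'), F(c')) be two ordered minimal Markoff-Fibonacci m-triples (so 2 ≤ a ≤ b ≤ c, 2 ≤ a' ≤ b' ≤ c', F(c) ≥ 3F(a)F(b), F(c') ≥ 3F(a')F(b'), and m(a,b,c) = m(a',b',c') = m) with c ≥ c'. If a = 2 or a = 3, and c ≥ 10, then c' = c or c' = c − 1. -/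
/-- Cassini's identity for Fibonacci numbers, in `ℤ`. -/
lemma fib_cassini_int (n : ℕ) :
    ((Nat.fib (n+1) : ℤ))^2 - (Nat.fib n : ℤ) * (Nat.fib (n+2) : ℤ) = (-1)^n := by
  induction n with
  | zero => simp
  | succ k ih =>
    have h1 : (Nat.fib (k+2) : ℤ) = Nat.fib k + Nat.fib (k+1) := by
      rw [Nat.fib_add_two]; push_cast; ring
    have h2 : (Nat.fib (k+3) : ℤ) = Nat.fib (k+1) + Nat.fib (k+2) := by
      rw [show k+3 = (k+1)+2 from rfl, Nat.fib_add_two]; push_cast; ring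
    rw [h1] at ih
    rw [h2, h1, pow_succ]
    linear_combination -ih

lemma markoff_upper_aux (u v w W : ℤ) (hu : 1 ≤ u) (huv : u ≤ v)
    (h3 : 3*u*v ≤ w) (hwW : w ≤ W) (hW : 13 ≤ W) :
    u^2 + v^2 + w^2 - 3*u*v*w ≤ W^2 - 3*W + 2 := by
  have hv : 1 ≤ v := hu.trans huv
  have huv1 : 1 ≤ u * v := by nlinarith
  have hw3 : 3 ≤ w := by nlinarith
  have s1 : u^2 + v^2 + w^2 - 3*u*v*w ≤ w^2 - 3*w + 2 := by
    nlinarith [mul_nonneg (by linarith : (0:ℤ) ≤ w - 3*u*v) (by linarith : (0:ℤ) ≤ u*v - 1),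
      mul_nonneg (by nlinarith : (0:ℤ) ≤ u^2 - 1) (by nlinarith : (0:ℤ) ≤ v^2 - 1),
      mul_nonneg (by linarith : (0:ℤ) ≤ u*v - 1) (by linarith : (0:ℤ) ≤ 8*(u*v) - 1)]
  have s2 : w^2 - 3*w + 2 ≤ W^2 - 3*W + 2 := by
    nlinarith [mul_nonneg (by linarith : (0:ℤ) ≤ W - w) (by linarith : (0:ℤ) ≤ W + w - 3)]
  linarith

lemma markoff_lower_aux2 (V S T : ℤ) (hS : 1 ≤ S) (hST : S ≤ T) (hV1 : 1 ≤ V)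
    (hVle : V ≤ 3*S + 5*T) :
    (5*S+8*T)^2 - 3*(5*S+8*T) + 3 ≤ 1 + V^2 + (13*S+21*T)^2 - 3*V*(13*S+21*T) := by
  have hT : 1 ≤ T := hS.trans hST
  nlinarith [mul_nonneg (by linarith : (0:ℤ) ≤ (3*S+5*T) - V)
    (by linarith : (0:ℤ) ≤ 3*(13*S+21*T) - V - (3*S+5*T)),
    mul_nonneg (by linarith : (0:ℤ) ≤ S - 1) (by linarith : (0:ℤ) ≤ T),
    mul_nonneg (by linarith : (0:ℤ) ≤ T - 1) (by linarith : (0:ℤ) ≤ T),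
    mul_nonneg (by linarith : (0:ℤ) ≤ S - 1) (by linarith : (0:ℤ) ≤ S)]

lemma markoff_lower_aux3 (V S T : ℤ) (hS : 1 ≤ S) (hST : S ≤ T) (hV1 : 1 ≤ V)
    (hVle : V ≤ 2*S + 3*T) (hcas : S^2 + S*T - T^2 ≤ 1) :
    (5*S+8*T)^2 - 3*(5*S+8*T) + 3 ≤ 4 + V^2 + (13*S+21*T)^2 - 6*V*(13*S+21*T) := by
  have hT : 1 ≤ T := hS.trans hST
  nlinarith [mul_nonneg (by linarith : (0:ℤ) ≤ (2*S+3*T) - V)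
    (by linarith : (0:ℤ) ≤ 6*(13*S+21*T) - V - (2*S+3*T)), hcas]

/-- Two ordered minimal Markoff-Fibonacci `m`-triples with `c ≥ c'`, `a = 2` or `a = 3`,
and `c ≥ 10`: then `c' = c` or `c' = c − 1`. -/
theorem close_top_indices_a_two_or_three (m : ℤ) (a b c a' b' c' : ℕ) (hm : 0 < m)
    (ha : 2 ≤ a) (hab : a ≤ b) (hbc : b ≤ c)
    (ha' : 2 ≤ a') (hab' : a' ≤ b') (hbc' : b' ≤ c')
    (hmin : 3 * Nat.fib a * Nat.fib b ≤ Nat.fib c)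
    (hmin' : 3 * Nat.fib a' * Nat.fib b' ≤ Nat.fib c')
    (heq : mF a b c = m) (heq' : mF a' b' c' = m)
    (hcc' : c' ≤ c) (ha23 : a = 2 ∨ a = 3) (hc10 : 10 ≤ c) :
    c' = c ∨ c' = c - 1 := by
  by_contra hcon
  push_neg at hcon
  have hc2 : c' + 2 ≤ c := by omega
  obtain ⟨n, rfl⟩ : ∃ n, c = n + 10 := ⟨c - 10, by omega⟩
  have e2 : Nat.fib (n+4) = Nat.fib (n+2) + Nat.fib (n+3) :=
    (show n+4 = (n+2)+2 from rfl) ▸ Nat.fib_add_two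
  have e3 : Nat.fib (n+5) = Nat.fib (n+3) + Nat.fib (n+4) :=
    (show n+5 = (n+3)+2 from rfl) ▸ Nat.fib_add_two
  have e4 : Nat.fib (n+6) = Nat.fib (n+4) + Nat.fib (n+5) :=
    (show n+6 = (n+4)+2 from rfl) ▸ Nat.fib_add_two
  have e5 : Nat.fib (n+7) = Nat.fib (n+5) + Nat.fib (n+6) :=
    (show n+7 = (n+5)+2 from rfl) ▸ Nat.fib_add_two
  have e6 : Nat.fib (n+8) = Nat.fib (n+6) + Nat.fib (n+7) :=
    (show n+8 = (n+6)+2 from rfl) ▸ Nat.fib_add_two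
  have e7 : Nat.fib (n+9) = Nat.fib (n+7) + Nat.fib (n+8) :=
    (show n+9 = (n+7)+2 from rfl) ▸ Nat.fib_add_two
  have e8 : Nat.fib (n+10) = Nat.fib (n+8) + Nat.fib (n+9) :=
    (show n+10 = (n+8)+2 from rfl) ▸ Nat.fib_add_two
  have hspos : 0 < Nat.fib (n+2) := Nat.fib_pos.mpr (by omega)
  have hstm : Nat.fib (n+2) ≤ Nat.fib (n+3) := Nat.fib_mono (by omega)
  have hS : (1:ℤ) ≤ (Nat.fib (n+2) : ℤ) := by exact_mod_cast hspos
  have hST : (Nat.fib (n+2) : ℤ) ≤ (Nat.fib (n+3) : ℤ) := by exact_mod_cast hstm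
  have E6 : (Nat.fib (n+6) : ℤ) = 2*(Nat.fib (n+2):ℤ) + 3*(Nat.fib (n+3):ℤ) := by
    push_cast [e4, e3, e2]; ring
  have E7 : (Nat.fib (n+7) : ℤ) = 3*(Nat.fib (n+2):ℤ) + 5*(Nat.fib (n+3):ℤ) := by
    push_cast [e5, e4, e3, e2]; ring
  have E8 : (Nat.fib (n+8) : ℤ) = 5*(Nat.fib (n+2):ℤ) + 8*(Nat.fib (n+3):ℤ) := by
    push_cast [e6, e5, e4, e3, e2]; ring
  have E10 : (Nat.fib (n+10) : ℤ) = 13*(Nat.fib (n+2):ℤ) + 21*(Nat.fib (n+3):ℤ) := by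
    push_cast [e8, e7, e6, e5, e4, e3, e2]; ring
  obtain ⟨S, hSdef⟩ : ∃ S : ℤ, (Nat.fib (n+2) : ℤ) = S := ⟨_, rfl⟩
  obtain ⟨T, hTdef⟩ : ∃ T : ℤ, (Nat.fib (n+3) : ℤ) = T := ⟨_, rfl⟩
  obtain ⟨u, hudef⟩ : ∃ u : ℤ, (Nat.fib a' : ℤ) = u := ⟨_, rfl⟩
  obtain ⟨v, hvdef⟩ : ∃ v : ℤ, (Nat.fib b' : ℤ) = v := ⟨_, rfl⟩
  obtain ⟨w, hwdef⟩ : ∃ w : ℤ, (Nat.fib c' : ℤ) = w := ⟨_, rfl⟩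
  obtain ⟨V, hVdef⟩ : ∃ V : ℤ, (Nat.fib b : ℤ) = V := ⟨_, rfl⟩
  rw [hSdef] at hS
  rw [hSdef, hTdef] at hST E6 E7 E8 E10
  -- upper bound from the primed triple
  have hu : 1 ≤ u := by
    rw [← hudef]; exact_mod_cast Nat.fib_pos.mpr (show 0 < a' by omega)
  have huv : u ≤ v := by rw [← hudef, ← hvdef]; exact_mod_cast Nat.fib_mono hab'
  have h3uv : 3*u*v ≤ w := by
    rw [← hudef, ← hvdef, ← hwdef]; exact_mod_cast hmin'
  have hwW : w ≤ 5*S + 8*T := by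
    rw [← hwdef, ← E8]; exact_mod_cast Nat.fib_mono (show c' ≤ n+8 by omega)
  unfold mF at heq' heq
  rw [hudef, hvdef, hwdef] at heq'
  have hW13 : (13:ℤ) ≤ 5*S + 8*T := by linarith
  have hup : m ≤ (5*S+8*T)^2 - 3*(5*S+8*T) + 2 := by
    have := markoff_upper_aux u v w (5*S+8*T) hu huv h3uv hwW hW13
    linarith [heq'.ge, heq'.le, this]
  -- lower bound from the unprimed triple
  have hV1 : 1 ≤ V := by
    rw [← hVdef]; exact_mod_cast Nat.fib_pos.mpr (show 0 < b by omega)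
  have hlow : (5*S+8*T)^2 - 3*(5*S+8*T) + 3 ≤ m := by
    rcases ha23 with h2 | h3
    · -- a = 2
      subst h2
      have hf2 : Nat.fib 2 = 1 := rfl
      have hb7 : b ≤ n + 7 := by
        by_contra hb
        push_neg at hb
        have h := Nat.fib_mono (show n+8 ≤ b by omega)
        rw [hf2] at hmin
        omega
      have hVle : V ≤ 3*S + 5*T := by
        rw [← hVdef, ← E7]; exact_mod_cast Nat.fib_mono hb7
      rw [hf2, E10, hVdef] at heq
      have hmv : 1 + V^2 + (13*S+21*T)^2 - 3*V*(13*S+21*T) = m := by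
        push_cast at heq; linear_combination heq
      have := markoff_lower_aux2 V S T hS hST hV1 hVle
      linarith
    · -- a = 3
      subst h3
      have hf3 : Nat.fib 3 = 2 := rfl
      have hb6 : b ≤ n + 6 := by
        by_contra hb
        push_neg at hb
        have h := Nat.fib_mono (show n+7 ≤ b by omega)
        rw [hf3] at hmin
        omega
      have hVle : V ≤ 2*S + 3*T := by
        rw [← hVdef, ← E6]; exact_mod_cast Nat.fib_mono hb6
      rw [hf3, E10, hVdef] at heq
      have hmv : 4 + V^2 + (13*S+21*T)^2 - 6*V*(13*S+21*T) = m := by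
        push_cast at heq; linear_combination heq
      have hcas : S^2 + S*T - T^2 ≤ 1 := by
        have h := fib_cassini_int (n+2)
        have hE4 : (Nat.fib (n+4) : ℤ) = S + T := by
          rw [← hSdef, ← hTdef]; push_cast [e2]; ring
        rw [show n+2+1 = n+3 from rfl, show n+2+2 = n+4 from rfl, hE4, hSdef, hTdef] at h
        have hp : (-1 : ℤ) ≤ (-1:ℤ)^(n+2) := by
          rcases Nat.even_or_odd (n+2) with hpar | hpar
          · rw [hpar.neg_one_pow]; norm_num
          · rw [hpar.neg_one_pow]
        have h2 : S^2 + S*T - T^2 = -(-1:ℤ)^(n+2) := by linear_combination -h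
        rw [h2]; linarith [hp]
      have := markoff_lower_aux3 V S T hS hST hV1 hVle hcas
      linarith
  linarith
end

section
/- Let m > 0 and let (F(a), F(b), F(c)) and (F(a'), F(b'), F(c')) be two ordered minimal Markoff-Fibonacci m-triples (so 2 ≤ a ≤ b ≤ c, 2 ≤ a' ≤ b' ≤ c', F(c) ≥ 3F(a)F(b), F(c') ≥ 3F(a')F(b'), and m(a,b,c) = m(a',b',c') = m) with c' = c − 1. If c ≥ 7, then a + b = c − 1. -/
private lemma fib_le_mul (x y : ℕ) :
    Nat.fib (x + y) ≤ Nat.fib (x + 1) * Nat.fib (y + 1) := by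
  cases y with
  | zero => simpa using Nat.fib_le_fib_succ
  | succ w =>
      have h : Nat.fib (x + w + 1)
          = Nat.fib x * Nat.fib w + Nat.fib (x + 1) * Nat.fib (w + 1) :=
        Nat.fib_add x w
      have hx : Nat.fib x ≤ Nat.fib (x + 1) := Nat.fib_le_fib_succ
      have h2 : Nat.fib (w + 2) = Nat.fib w + Nat.fib (w + 1) := Nat.fib_add_two
      have hxy : x + (w + 1) = x + w + 1 := by omega
      rw [hxy, h]
      have hmul : Nat.fib x * Nat.fib w ≤ Nat.fib (x + 1) * Nat.fib w :=
        Nat.mul_le_mul_right _ hx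
      calc Nat.fib x * Nat.fib w + Nat.fib (x + 1) * Nat.fib (w + 1)
          ≤ Nat.fib (x + 1) * Nat.fib w + Nat.fib (x + 1) * Nat.fib (w + 1) :=
            Nat.add_le_add_right hmul _
        _ = Nat.fib (x + 1) * Nat.fib (w + 1 + 1) := by
            rw [show w + 1 + 1 = w + 2 from rfl, h2]; ring

/-- `F(a)F(b) ≥ F(a+b−2)` for `a,b ≥ 2` (stated with `a = α+2`, `b = β+2`). -/
private lemma fib_mul_lower (α β : ℕ) :
    Nat.fib (α + β + 2) ≤ Nat.fib (α + 2) * Nat.fib (β + 2) := by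
  have h := fib_le_mul (α + 1) (β + 1)
  have e1 : α + 1 + (β + 1) = α + β + 2 := by omega
  have e2 : α + 1 + 1 = α + 2 := by omega
  have e3 : β + 1 + 1 = β + 2 := by omega
  rwa [e1, e2, e3] at h

/-- `F(a)F(b) ≤ 2·F(a+b−3)` for `a,b ≥ 2` (stated with `a = α+2`, `b = β+2`). -/
private lemma fib_mul_upper (α β : ℕ) :
    Nat.fib (α + 2) * Nat.fib (β + 2) ≤ 2 * Nat.fib (α + β + 1) := by
  have h : Nat.fib (α + 1 + (β + 1) + 1)
      = Nat.fib (α + 1) * Nat.fib (β + 1)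
        + Nat.fib (α + 1 + 1) * Nat.fib (β + 1 + 1) := Nat.fib_add (α + 1) (β + 1)
  have e1 : α + 1 + (β + 1) + 1 = α + β + 3 := by omega
  have e2 : α + 1 + 1 = α + 2 := by omega
  have e3 : β + 1 + 1 = β + 2 := by omega
  rw [e1, e2, e3] at h
  have hlow : Nat.fib (α + β) ≤ Nat.fib (α + 1) * Nat.fib (β + 1) := fib_le_mul α β
  have h5 : Nat.fib (α + β + 2) = Nat.fib (α + β) + Nat.fib (α + β + 1) := Nat.fib_add_two
  have h6 : Nat.fib (α + β + 3) = Nat.fib (α + β + 1) + Nat.fib (α + β + 2) := by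
    rw [show α + β + 3 = (α + β + 1) + 2 from by omega]
    exact Nat.fib_add_two
  omega

/-- For a minimal triple `(A,B,C)` the value `m` satisfies `m ≤ C² − 3C + 2`. -/
private lemma m_upper {A B C m : ℤ} (hA : 1 ≤ A) (hB : 1 ≤ B) (h3 : 3 * A * B ≤ C)
    (hm : A ^ 2 + B ^ 2 + C ^ 2 - 3 * A * B * C = m) : m ≤ C ^ 2 - 3 * C + 2 := by
  have hAB : (1 : ℤ) ≤ A * B := by nlinarith
  have hA2 : (1 : ℤ) ≤ A ^ 2 := by nlinarith
  have hB2 : (1 : ℤ) ≤ B ^ 2 := by nlinarith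
  have h1 : (0 : ℤ) ≤ (A ^ 2 - 1) * (B ^ 2 - 1) :=
    mul_nonneg (by linarith) (by linarith)
  have h2 : (0 : ℤ) ≤ (A * B - 1) * (3 * C - A * B - 1) :=
    mul_nonneg (by linarith) (by linarith)
  nlinarith [h1, h2]

/-- For a minimal triple `(A,B,C)` with `t = C − 3AB`, one has `t² ≤ m`. -/
private lemma sq_t_le {A B C m : ℤ} (hA : 1 ≤ A) (hB : 1 ≤ B) (h3 : 3 * A * B ≤ C)
    (hm : A ^ 2 + B ^ 2 + C ^ 2 - 3 * A * B * C = m) : (C - 3 * A * B) ^ 2 ≤ m := by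
  have hAB : (1 : ℤ) ≤ A * B := by nlinarith
  have h1 : (0 : ℤ) ≤ 3 * (A * B) * (C - 3 * A * B) := by
    apply mul_nonneg (by nlinarith) (by nlinarith)
  nlinarith [h1, sq_nonneg A, sq_nonneg B]

private lemma branch1 {A B C C' U V m : ℤ} (hA : 1 ≤ A) (hB : 1 ≤ B)
    (h3 : 3 * A * B ≤ C) (heq : A ^ 2 + B ^ 2 + C ^ 2 - 3 * A * B * C = m)
    (hmUB : m ≤ C' ^ 2 - 3 * C' + 2) (hC'1 : 1 ≤ C')
    (hABu : A * B ≤ 2 * U) (hC : C = 13 * U + 8 * V) (hC' : C' = 8 * U + 5 * V)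
    (hV : 1 ≤ V) (hUV : V ≤ U) (hU2V : U ≤ 2 * V) : False := by
  have ht2 : (C - 3 * A * B) ^ 2 ≤ m := sq_t_le hA hB h3 heq
  have htnn : (0 : ℤ) ≤ C - 3 * A * B := by linarith
  have hC'm1 : (0 : ℤ) ≤ C' - 1 := by linarith
  have htle : C - 3 * A * B ≤ C' - 1 := by
    nlinarith [ht2, hmUB, hC'1, htnn, hC'm1]
  linarith

private lemma branch2 {A B C C' U V m : ℤ} (hA : 1 ≤ A) (hB : 1 ≤ B)
    (h3 : 3 * A * B ≤ C) (heq : A ^ 2 + B ^ 2 + C ^ 2 - 3 * A * B * C = m)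
    (hmUB : m ≤ C' ^ 2 - 3 * C' + 2)
    (hABu : A * B ≤ 2 * (U + V)) (hC : C = 13 * U + 8 * V) (hC' : C' = 8 * U + 5 * V)
    (hV : 1 ≤ V) (hUV : V ≤ U) : False := by
  have hCpos : (0 : ℤ) ≤ C := by nlinarith
  have h1 : 3 * C * (A * B) ≤ 3 * C * (2 * (U + V)) :=
    mul_le_mul_of_nonneg_left hABu (by linarith)
  have h2 : V * V ≤ U * U := mul_le_mul hUV hUV (by linarith) (by linarith)
  have h3' : V * V ≤ U * V := mul_le_mul_of_nonneg_right hUV (by linarith)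
  nlinarith [heq, hmUB, h1, h2, h3', sq_nonneg (A - 1), sq_nonneg (B - 1),
    sq_nonneg (A - B)]

/-- Two ordered minimal Markoff-Fibonacci `m`-triples with `c' = c − 1` and `c ≥ 7`:
then `a + b = c − 1`. -/
theorem sum_ab_eq_c_sub_one (m : ℤ) (a b c a' b' c' : ℕ) (hm : 0 < m)
    (ha : 2 ≤ a) (hab : a ≤ b) (hbc : b ≤ c)
    (ha' : 2 ≤ a') (hab' : a' ≤ b') (hbc' : b' ≤ c')
    (hmin : 3 * Nat.fib a * Nat.fib b ≤ Nat.fib c)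
    (hmin' : 3 * Nat.fib a' * Nat.fib b' ≤ Nat.fib c')
    (heq : mF a b c = m) (heq' : mF a' b' c' = m)
    (hcc' : c' = c - 1) (hc7 : 7 ≤ c) :
    a + b = c - 1 := by
  have hA : 0 < Nat.fib a := Nat.fib_pos.2 (by omega)
  have hB : 0 < Nat.fib b := Nat.fib_pos.2 (by omega)
  have hA' : 0 < Nat.fib a' := Nat.fib_pos.2 (by omega)
  have hB' : 0 < Nat.fib b' := Nat.fib_pos.2 (by omega)
  by_cases hc8 : c ≤ 7
  · -- the case c = 7 : finite check
    have hc : c = 7 := by omega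
    subst hc
    have hc' : c' = 6 := by omega
    subst hc'
    have f2 : Nat.fib 2 = 1 := by decide
    have f3 : Nat.fib 3 = 2 := by decide
    have f4 : Nat.fib 4 = 3 := by decide
    have f5 : Nat.fib 5 = 5 := by decide
    have f6 : Nat.fib 6 = 8 := by decide
    have f7 : Nat.fib 7 = 13 := by decide
    have hb4 : b ≤ 4 := by
      by_contra hcon
      have h5 : (5 : ℕ) ≤ Nat.fib b := by
        calc (5:ℕ) = Nat.fib 5 := f5.symm
          _ ≤ Nat.fib b := Nat.fib_mono (by omega)
      nlinarith [hmin, hA, f7]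
    have hb3 : b' ≤ 3 := by
      by_contra hcon
      have h5 : (3 : ℕ) ≤ Nat.fib b' := by
        calc (3:ℕ) = Nat.fib 4 := f4.symm
          _ ≤ Nat.fib b' := Nat.fib_mono (by omega)
      nlinarith [hmin', hA', f6]
    have hb2 : 2 ≤ b := by omega
    have hb2' : 2 ≤ b' := by omega
    interval_cases b <;> interval_cases a <;> interval_cases b' <;> interval_cases a' <;>
      (revert heq heq' hmin hmin'; norm_num [mF, f2, f3, f4, f5, f6, f7]) <;> intros <;> omega
  · -- general case c ≥ 8
    obtain ⟨k, rfl⟩ : ∃ k, c = k + 8 := ⟨c - 8, by omega⟩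
    have hc' : c' = k + 7 := by omega
    subst hc'
    obtain ⟨α, rfl⟩ : ∃ α, a = α + 2 := ⟨a - 2, by omega⟩
    obtain ⟨β, rfl⟩ : ∃ β, b = β + 2 := ⟨b - 2, by omega⟩
    simp only [mF] at heq heq'
    -- Fibonacci values at k+3 .. k+8 in terms of u = fib (k+2), v = fib (k+1)
    have hv1 : 1 ≤ Nat.fib (k + 1) := Nat.fib_pos.2 (by omega)
    have hvu : Nat.fib (k + 1) ≤ Nat.fib (k + 2) := Nat.fib_mono (by omega)
    have hu2v : Nat.fib (k + 2) ≤ 2 * Nat.fib (k + 1) := by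
      have h := Nat.fib_add_two (n := k)
      have hk : Nat.fib k ≤ Nat.fib (k + 1) := Nat.fib_mono (by omega)
      omega
    have e3 : Nat.fib (k + 3) = Nat.fib (k + 2) + Nat.fib (k + 1) := by
      have h : Nat.fib (k + 1 + 2) = Nat.fib (k + 1) + Nat.fib (k + 1 + 1) := Nat.fib_add_two
      rw [show k+1+2 = k+3 from by omega, show k+1+1 = k+2 from by omega] at h
      omega
    have e4 : Nat.fib (k + 4) = 2 * Nat.fib (k + 2) + Nat.fib (k + 1) := by
      have h : Nat.fib (k + 2 + 2) = Nat.fib (k + 2) + Nat.fib (k + 2 + 1) := Nat.fib_add_two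
      rw [show k+2+2 = k+4 from by omega, show k+2+1 = k+3 from by omega] at h
      omega
    have e5 : Nat.fib (k + 5) = 3 * Nat.fib (k + 2) + 2 * Nat.fib (k + 1) := by
      have h : Nat.fib (k + 3 + 2) = Nat.fib (k + 3) + Nat.fib (k + 3 + 1) := Nat.fib_add_two
      rw [show k+3+2 = k+5 from by omega, show k+3+1 = k+4 from by omega] at h
      omega
    have e6 : Nat.fib (k + 6) = 5 * Nat.fib (k + 2) + 3 * Nat.fib (k + 1) := by
      have h : Nat.fib (k + 4 + 2) = Nat.fib (k + 4) + Nat.fib (k + 4 + 1) := Nat.fib_add_two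
      rw [show k+4+2 = k+6 from by omega, show k+4+1 = k+5 from by omega] at h
      omega
    have e7 : Nat.fib (k + 7) = 8 * Nat.fib (k + 2) + 5 * Nat.fib (k + 1) := by
      have h : Nat.fib (k + 5 + 2) = Nat.fib (k + 5) + Nat.fib (k + 5 + 1) := Nat.fib_add_two
      rw [show k+5+2 = k+7 from by omega, show k+5+1 = k+6 from by omega] at h
      omega
    have e8 : Nat.fib (k + 8) = 13 * Nat.fib (k + 2) + 8 * Nat.fib (k + 1) := by
      have h : Nat.fib (k + 6 + 2) = Nat.fib (k + 6) + Nat.fib (k + 6 + 1) := Nat.fib_add_two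
      rw [show k+6+2 = k+8 from by omega, show k+6+1 = k+7 from by omega] at h
      omega
    -- integer versions of the basic facts
    have hA1 : (1 : ℤ) ≤ (Nat.fib (α + 2) : ℤ) := by exact_mod_cast hA
    have hB1 : (1 : ℤ) ≤ (Nat.fib (β + 2) : ℤ) := by exact_mod_cast hB
    have hA1' : (1 : ℤ) ≤ (Nat.fib a' : ℤ) := by exact_mod_cast hA'
    have hB1' : (1 : ℤ) ≤ (Nat.fib b' : ℤ) := by exact_mod_cast hB'
    have hminZ : 3 * (Nat.fib (α + 2) : ℤ) * (Nat.fib (β + 2) : ℤ) ≤ (Nat.fib (k + 8) : ℤ) := by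
      exact_mod_cast hmin
    have hminZ' : 3 * (Nat.fib a' : ℤ) * (Nat.fib b' : ℤ) ≤ (Nat.fib (k + 7) : ℤ) := by
      exact_mod_cast hmin'
    have hmUB : m ≤ (Nat.fib (k + 7) : ℤ) ^ 2 - 3 * (Nat.fib (k + 7) : ℤ) + 2 :=
      m_upper hA1' hB1' hminZ' heq'
    have E7 : (Nat.fib (k + 7) : ℤ) = 8 * (Nat.fib (k + 2) : ℤ) + 5 * (Nat.fib (k + 1) : ℤ) := by
      exact_mod_cast e7
    have E8 : (Nat.fib (k + 8) : ℤ) = 13 * (Nat.fib (k + 2) : ℤ) + 8 * (Nat.fib (k + 1) : ℤ) := by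
      exact_mod_cast e8
    have hv1Z : (1 : ℤ) ≤ (Nat.fib (k + 1) : ℤ) := by exact_mod_cast hv1
    have hvuZ : (Nat.fib (k + 1) : ℤ) ≤ (Nat.fib (k + 2) : ℤ) := by exact_mod_cast hvu
    have hu2vZ : (Nat.fib (k + 2) : ℤ) ≤ 2 * (Nat.fib (k + 1) : ℤ) := by exact_mod_cast hu2v
    -- bounds on AB
    have hABlow : Nat.fib (α + β + 2) ≤ Nat.fib (α + 2) * Nat.fib (β + 2) :=
      fib_mul_lower α β
    have hABup : Nat.fib (α + 2) * Nat.fib (β + 2) ≤ 2 * Nat.fib (α + β + 1) :=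
      fib_mul_upper α β
    -- Step: α + β ≤ k + 3
    have hstep : α + β ≤ k + 3 := by
      by_contra hcon
      have h1 : Nat.fib (k + 6) ≤ Nat.fib (α + β + 2) := Nat.fib_mono (by omega)
      linarith [hmin, hABlow, h1, e6, e8, hvu, hv1]
    by_cases hgoal : α + β = k + 3
    · omega
    rcases Nat.lt_or_ge (α + β) (k + 2) with hsml | hsbig
    · -- case α + β ≤ k + 1 : contradiction
      exfalso
      have hup : Nat.fib (α + β + 1) ≤ Nat.fib (k + 2) := Nat.fib_mono (by omega)
      have hABuZ : (Nat.fib (α + 2) : ℤ) * (Nat.fib (β + 2) : ℤ)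
          ≤ 2 * (Nat.fib (k + 2) : ℤ) := by
        exact_mod_cast le_trans hABup (Nat.mul_le_mul_left 2 hup)
      have hC'1 : (1 : ℤ) ≤ (Nat.fib (k + 7) : ℤ) := by
        have h : 0 < Nat.fib (k + 7) := Nat.fib_pos.2 (by omega)
        exact_mod_cast h
      exact branch1 hA1 hB1 hminZ heq hmUB hC'1 hABuZ E8 E7 hv1Z hvuZ hu2vZ
    · -- case α + β = k + 2 : contradiction
      exfalso
      have hkk : α + β = k + 2 := by omega
      have hup : Nat.fib (α + β + 1) = Nat.fib (k + 3) := by rw [hkk]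
      have hABuZ : (Nat.fib (α + 2) : ℤ) * (Nat.fib (β + 2) : ℤ)
          ≤ 2 * ((Nat.fib (k + 2) : ℤ) + (Nat.fib (k + 1) : ℤ)) := by
        have h1 : Nat.fib (α + 2) * Nat.fib (β + 2)
            ≤ 2 * (Nat.fib (k + 2) + Nat.fib (k + 1)) := by
          have := hABup
          rw [hup, e3] at this
          omega
        exact_mod_cast h1
      exact branch2 hA1 hB1 hminZ heq hmUB hABuZ E8 E7 hv1Z hvuZ
end

section
/- Let m > 0 and let (F(a), F(b), F(c)) and (F(a'), F(b'), F(c')) be two ordered minimal Markoff-Fibonacci m-triples (so 2 ≤ a ≤ b ≤ c, 2 ≤ a' ≤ b' ≤ c', F(c) ≥ 3F(a)F(b), F(c') ≥ 3F(a')F(b'), and m(a,b,c) = m(a',b',c') = m) with c' = c − 1. If c ≥ 11, then it is not the case that both a = 2 and a' = 2. -/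
lemma ineqI (Y Z v : ℤ) (hZ1 : 1 ≤ Z) (hZY : Z ≤ Y) (hY2Z : Y ≤ 2*Z)
    (hv1 : 1 ≤ v) (hvY : v ≤ Y)
    (key : (13*Y+8*Z)^2 + (55*Y+34*Z)^2 - 3*(13*Y+8*Z)*(55*Y+34*Z)
         = v^2 + (34*Y+21*Z)^2 - 3*v*(34*Y+21*Z)) : False := by
  nlinarith [mul_nonneg (by linarith : (0:ℤ) ≤ Y - v) (by linarith : (0:ℤ) ≤ 3*(34*Y+21*Z) - Y - v),
    mul_pos (by linarith : (0:ℤ) < Z) (by linarith : (0:ℤ) < Y), sq_nonneg Z, sq_nonneg Y]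

lemma ineqII (Y Z v : ℤ) (hZ1 : 1 ≤ Z) (hZY : Z ≤ Y) (hY2Z : Y ≤ 2*Z)
    (hvX : Y + Z ≤ v) (hmv : 3*v ≤ 34*Y+21*Z)
    (key : (13*Y+8*Z)^2 + (55*Y+34*Z)^2 - 3*(13*Y+8*Z)*(55*Y+34*Z)
         = v^2 + (34*Y+21*Z)^2 - 3*v*(34*Y+21*Z)) : False := by
  nlinarith [mul_nonneg (by linarith : (0:ℤ) ≤ v - (Y+Z)) (by linarith : (0:ℤ) ≤ 3*(34*Y+21*Z) - v - (Y+Z)),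
    mul_nonneg (by linarith : (0:ℤ) ≤ 2*Z - Y) (by linarith : (0:ℤ) ≤ Y),
    mul_pos (by linarith : (0:ℤ) < Z) (by linarith : (0:ℤ) < Y), sq_nonneg Z]

lemma ineqIII (Y Z u v : ℤ) (hZ1 : 1 ≤ Z) (hZY : Z ≤ Y) (hY2Z : Y ≤ 2*Z)
    (hu1 : 1 ≤ u) (hu7 : u ≤ 8*Y+5*Z) (hv1 : 1 ≤ v) (hmv : 3*v ≤ 34*Y+21*Z)
    (key : u^2 + (55*Y+34*Z)^2 - 3*u*(55*Y+34*Z)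
         = v^2 + (34*Y+21*Z)^2 - 3*v*(34*Y+21*Z)) : False := by
  nlinarith [mul_nonneg (by linarith : (0:ℤ) ≤ 8*Y+5*Z - u) (by nlinarith : (0:ℤ) ≤ 3*(55*Y+34*Z) - (8*Y+5*Z) - u),
    mul_nonneg (by linarith : (0:ℤ) ≤ v - 1) (by linarith : (0:ℤ) ≤ 3*(34*Y+21*Z) - v - 1),
    mul_pos (by linarith : (0:ℤ) < Z) (by linarith : (0:ℤ) < Y), sq_nonneg Z, sq_nonneg Y]

/-- Two ordered minimal Markoff-Fibonacci `m`-triples with `c' = c − 1` and `c ≥ 11`: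
then not both `a = 2` and `a' = 2`. -/
theorem not_both_a_eq_two (m : ℤ) (a b c a' b' c' : ℕ) (hm : 0 < m)
    (ha : 2 ≤ a) (hab : a ≤ b) (hbc : b ≤ c)
    (ha' : 2 ≤ a') (hab' : a' ≤ b') (hbc' : b' ≤ c')
    (hmin : 3 * Nat.fib a * Nat.fib b ≤ Nat.fib c)
    (hmin' : 3 * Nat.fib a' * Nat.fib b' ≤ Nat.fib c')
    (heq : mF a b c = m) (heq' : mF a' b' c' = m)
    (hcc' : c' = c - 1) (hc11 : 11 ≤ c) :
    ¬(a = 2 ∧ a' = 2) := by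
  rintro ⟨rfl, rfl⟩
  obtain ⟨k, rfl⟩ : ∃ k, c = k + 11 := ⟨c - 11, by omega⟩
  obtain rfl : c' = k + 10 := by omega
  -- Fibonacci recurrences
  have h1 : Nat.fib (k+2) = Nat.fib k + Nat.fib (k+1) := Nat.fib_add_two
  have h2 : Nat.fib (k+3) = Nat.fib (k+1) + Nat.fib (k+2) := Nat.fib_add_two (n := k+1)
  have h3 : Nat.fib (k+4) = Nat.fib (k+2) + Nat.fib (k+3) := Nat.fib_add_two (n := k+2)
  have h4 : Nat.fib (k+5) = Nat.fib (k+3) + Nat.fib (k+4) := Nat.fib_add_two (n := k+3)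
  have h5 : Nat.fib (k+6) = Nat.fib (k+4) + Nat.fib (k+5) := Nat.fib_add_two (n := k+4)
  have h6 : Nat.fib (k+7) = Nat.fib (k+5) + Nat.fib (k+6) := Nat.fib_add_two (n := k+5)
  have h7 : Nat.fib (k+8) = Nat.fib (k+6) + Nat.fib (k+7) := Nat.fib_add_two (n := k+6)
  have h8 : Nat.fib (k+9) = Nat.fib (k+7) + Nat.fib (k+8) := Nat.fib_add_two (n := k+7)
  have h9 : Nat.fib (k+10) = Nat.fib (k+8) + Nat.fib (k+9) := Nat.fib_add_two (n := k+8)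
  have h10 : Nat.fib (k+11) = Nat.fib (k+9) + Nat.fib (k+10) := Nat.fib_add_two (n := k+9)
  have hz1 : 1 ≤ Nat.fib (k+1) := Nat.fib_pos.mpr (by omega)
  have hk01 : Nat.fib k ≤ Nat.fib (k+1) := Nat.fib_mono (by omega)
  have e10 : (Nat.fib (k+10) : ℤ) = 34*(Nat.fib (k+2):ℤ) + 21*(Nat.fib (k+1):ℤ) := by
    push_cast; omega
  have e11 : (Nat.fib (k+11) : ℤ) = 55*(Nat.fib (k+2):ℤ) + 34*(Nat.fib (k+1):ℤ) := by
    push_cast; omega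
  have e8 : (Nat.fib (k+8) : ℤ) = 13*(Nat.fib (k+2):ℤ) + 8*(Nat.fib (k+1):ℤ) := by
    push_cast; omega
  have e7 : (Nat.fib (k+7) : ℤ) = 8*(Nat.fib (k+2):ℤ) + 5*(Nat.fib (k+1):ℤ) := by
    push_cast; omega
  have hZ1 : (1:ℤ) ≤ (Nat.fib (k+1) : ℤ) := by exact_mod_cast hz1
  have hZY : (Nat.fib (k+1) : ℤ) ≤ (Nat.fib (k+2) : ℤ) := by
    exact_mod_cast Nat.fib_mono (show k+1 ≤ k+2 by omega)
  have hY2Z : (Nat.fib (k+2) : ℤ) ≤ 2*(Nat.fib (k+1) : ℤ) := by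
    have : Nat.fib (k+2) ≤ 2 * Nat.fib (k+1) := by omega
    exact_mod_cast this
  -- the key equation
  have key : (Nat.fib b : ℤ)^2 + (Nat.fib (k+11):ℤ)^2 - 3*(Nat.fib b : ℤ)*(Nat.fib (k+11):ℤ)
      = (Nat.fib b' : ℤ)^2 + (Nat.fib (k+10):ℤ)^2 - 3*(Nat.fib b' : ℤ)*(Nat.fib (k+10):ℤ) := by
    simp only [mF, Nat.fib_two] at heq heq'
    push_cast at heq heq'
    linarith
  -- bounds
  have hminz : 3 * (Nat.fib b : ℤ) ≤ (Nat.fib (k+11) : ℤ) := by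
    rw [Nat.fib_two] at hmin
    exact_mod_cast (by omega : 3 * Nat.fib b ≤ Nat.fib (k+11))
  have hminz' : 3 * (Nat.fib b' : ℤ) ≤ (Nat.fib (k+10) : ℤ) := by
    rw [Nat.fib_two] at hmin'
    exact_mod_cast (by omega : 3 * Nat.fib b' ≤ Nat.fib (k+10))
  have hv1 : (1:ℤ) ≤ (Nat.fib b' : ℤ) := by
    exact_mod_cast Nat.fib_pos.mpr (show 0 < b' by omega)
  have hu1 : (1:ℤ) ≤ (Nat.fib b : ℤ) := by
    exact_mod_cast Nat.fib_pos.mpr (show 0 < b by omega)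
  -- b ≤ k+8
  have hb8 : b ≤ k + 8 := by
    by_contra hcon
    push_neg at hcon
    have h9b : Nat.fib (k+9) ≤ Nat.fib b := Nat.fib_mono (by omega)
    have hnat : 3 * Nat.fib b ≤ Nat.fib (k+11) := by exact_mod_cast hminz
    omega
  rcases eq_or_lt_of_le hb8 with hbeq | hblt
  · -- b = k+8
    have hub : (Nat.fib b : ℤ) = 13*(Nat.fib (k+2):ℤ) + 8*(Nat.fib (k+1):ℤ) := by
      rw [hbeq]; exact e8
    rw [hub, e11, e10] at key
    rcases le_or_gt b' (k+2) with hb' | hb'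
    · have hvY : (Nat.fib b' : ℤ) ≤ (Nat.fib (k+2) : ℤ) := by
        exact_mod_cast Nat.fib_mono hb'
      exact ineqI _ _ _ hZ1 hZY hY2Z hv1 hvY key
    · have hvX : (Nat.fib (k+2):ℤ) + (Nat.fib (k+1):ℤ) ≤ (Nat.fib b' : ℤ) := by
        have hmono : Nat.fib (k+3) ≤ Nat.fib b' := Nat.fib_mono (by omega)
        have : Nat.fib (k+2) + Nat.fib (k+1) ≤ Nat.fib b' := by omega
        exact_mod_cast this
      rw [e10] at hminz'
      exact ineqII _ _ _ hZ1 hZY hY2Z hvX hminz' key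
  · -- b ≤ k+7
    have hub : (Nat.fib b : ℤ) ≤ 8*(Nat.fib (k+2):ℤ) + 5*(Nat.fib (k+1):ℤ) := by
      rw [← e7]
      exact_mod_cast Nat.fib_mono (show b ≤ k+7 by omega)
    rw [e11, e10] at key
    rw [e10] at hminz'
    exact ineqIII _ _ _ _ hZ1 hZY hY2Z hu1 hub hv1 hminz' key
end
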